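/- arXiv:2509.13538 — 6 statements merged into one kernel-verified Lean document; each statement's English description precedes it below -/
import Mathlib

section
/- Consider two groups (p = 1) with unit variances: for (η,θ) ∈ ℝ², let X ~ N(η,1) and Y ~ N(θ,1) be independent, and let P_{η,θ} denote their joint law conditioned on the event X < Y. Fix 0 < α < 1 and fix η ∈ ℝ. For θ₀ ∈ ℝ, let l(θ₀,η) and u(θ₀,η) be respectively the α/2 and 1 − α/2 quantiles of the marginal distribution of Y under P_{η,θ₀}. Define the oracle confidence set D(y) = { θ₀ ∈ ℝ : l(θ₀,η) ≤ y ≤ u(θ₀,η) }. Then for every (η,θ) ∈ ℝ², the selective expected width E[ λ(D(Y)) | X < Y ] (expectation under P_{η,θ}) is finite, where λ denotes Lebesgue measure on ℝ. -/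
open MeasureTheory ProbabilityTheory

/-- The joint law of independent `X ~ N(η,1)` and `Y ~ N(θ,1)` on `ℝ × ℝ`,
conditioned on the selection event `X < Y`. -/
noncomputable def selLaw (η θ : ℝ) : Measure (ℝ × ℝ) :=
  ((gaussianReal η 1).prod (gaussianReal θ 1))[|{ω : ℝ × ℝ | ω.1 < ω.2}]

section OracleAuxSection
open Set Real Filter
open scoped ENNReal NNReal

namespace OracleAux


lemma measurableSet_S : MeasurableSet {ω : ℝ × ℝ | ω.1 < ω.2} :=
  measurableSet_lt measurable_fst measurable_snd

lemma gauss_ne_zero (m : ℝ) {s : Set ℝ} {a b : ℝ} (hab : a < b) (hsub : Set.Ioo a b ⊆ s) :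
    gaussianReal m 1 s ≠ 0 := by
  intro h
  have h0 : gaussianReal m 1 (Set.Ioo a b) = 0 :=
    le_antisymm (h ▸ measure_mono hsub) (zero_le)
  have := gaussianReal_absolutelyContinuous' m (v := 1) one_ne_zero h0
  rw [Real.volume_Ioo] at this
  simp [ENNReal.ofReal_eq_zero, sub_nonpos, not_lt.mpr, hab.le] at this
  linarith



lemma gauss_Ico_le (m : ℝ) {C a b : ℝ}
    (hC : ∀ x ∈ Set.Ico a b, gaussianPDFReal m 1 x ≤ C) :
    gaussianReal m 1 (Set.Ico a b) ≤ ENNReal.ofReal C * ENNReal.ofReal (b - a) := by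
  rw [gaussianReal_apply m one_ne_zero _]
  calc ∫⁻ x in Set.Ico a b, gaussianPDF m 1 x
      ≤ ∫⁻ _ in Set.Ico a b, ENNReal.ofReal C := by
        refine setLIntegral_mono measurable_const (fun x hx => ?_)
        exact ENNReal.ofReal_le_ofReal (hC x hx)
    _ = ENNReal.ofReal C * ENNReal.ofReal (b - a) := by
        rw [setLIntegral_const, Real.volume_Ico]

lemma gauss_Ioo_ge (m : ℝ) {c a b : ℝ}
    (hge : ∀ x ∈ Set.Ioo a b, c ≤ gaussianPDFReal m 1 x) :
    ENNReal.ofReal c * ENNReal.ofReal (b - a) ≤ gaussianReal m 1 (Set.Ioo a b) := by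
  rw [gaussianReal_apply m one_ne_zero _]
  calc ENNReal.ofReal c * ENNReal.ofReal (b - a)
      = ∫⁻ _ in Set.Ioo a b, ENNReal.ofReal c := by rw [setLIntegral_const, Real.volume_Ioo]
    _ ≤ ∫⁻ x in Set.Ioo a b, gaussianPDF m 1 x := by
        refine setLIntegral_mono (measurable_gaussianPDF m 1) (fun x hx => ?_)
        exact ENNReal.ofReal_le_ofReal (hge x hx)

lemma pdf_eq (m x : ℝ) :
    gaussianPDFReal m 1 x = (√(2 * π))⁻¹ * rexp (- (x - m) ^ 2 / 2) := by
  simp [gaussianPDFReal]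

lemma integral_Ioi_x_pdf (s : ℝ) :
    ∫ x in Set.Ioi s, x * ((√(2 * π))⁻¹ * rexp (- x ^ 2 / 2))
      = (√(2 * π))⁻¹ * rexp (- s ^ 2 / 2) := by
  have hint : Integrable (fun x : ℝ => x * ((√(2 * π))⁻¹ * rexp (- x ^ 2 / 2))) := by
    have h := (integrable_mul_exp_neg_mul_sq (b := (1:ℝ)/2) (by norm_num)).const_mul (√(2 * π))⁻¹
    refine h.congr (Filter.Eventually.of_forall fun x => ?_)
    have hx : -(1/2 : ℝ) * x ^ 2 = - x ^ 2 / 2 := by ring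
    simp only [hx]; ring
  have hderiv : ∀ x ∈ Set.Ici s,
      HasDerivAt (fun x : ℝ => -((√(2 * π))⁻¹ * rexp (- x ^ 2 / 2)))
        (x * ((√(2 * π))⁻¹ * rexp (- x ^ 2 / 2))) x := by
    intro x _
    have h1 : HasDerivAt (fun x : ℝ => - x ^ 2 / 2) (-x) x := by
      have := ((hasDerivAt_pow 2 x).neg).div_const 2
      refine this.congr_deriv ?_
      simp; ring
    have h2 := (h1.exp.const_mul (√(2 * π))⁻¹).neg
    refine h2.congr_deriv ?_
    ring
  have htend : Tendsto (fun x : ℝ => -((√(2 * π))⁻¹ * rexp (- x ^ 2 / 2))) atTop (nhds 0) := by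
    have h1 : Tendsto (fun x : ℝ => - x ^ 2 / 2) atTop atBot := by
      apply Filter.Tendsto.atBot_div_const (by norm_num : (0:ℝ) < 2)
      exact Filter.tendsto_neg_atTop_atBot.comp (tendsto_pow_atTop two_ne_zero)
    have := (Real.tendsto_exp_atBot.comp h1).const_mul ((√(2 * π))⁻¹)
    simpa using this.neg
  have := integral_Ioi_of_hasDerivAt_of_tendsto' hderiv hint.integrableOn htend
  rw [this]
  simp

/-- Mills-type tail bound for the standard Gaussian. -/
lemma gauss_mills {s : ℝ} (hs : 1 ≤ s) :
    gaussianReal 0 1 (Set.Ioi s) ≤ ENNReal.ofReal (gaussianPDFReal 0 1 s / s) := by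
  have hs0 : 0 < s := lt_of_lt_of_le one_pos hs
  rw [gaussianReal_apply_eq_integral 0 one_ne_zero _]
  apply ENNReal.ofReal_le_ofReal
  have hint : Integrable (fun x : ℝ => x * ((√(2 * π))⁻¹ * rexp (- x ^ 2 / 2))) := by
    have h := (integrable_mul_exp_neg_mul_sq (b := (1:ℝ)/2) (by norm_num)).const_mul (√(2 * π))⁻¹
    refine h.congr (Filter.Eventually.of_forall fun x => ?_)
    have hx : -(1/2 : ℝ) * x ^ 2 = - x ^ 2 / 2 := by ring
    simp only [hx]; ring
  calc ∫ x in Set.Ioi s, gaussianPDFReal 0 1 x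
      ≤ ∫ x in Set.Ioi s, s⁻¹ * (x * ((√(2 * π))⁻¹ * rexp (- x ^ 2 / 2))) := by
        refine setIntegral_mono_on (integrable_gaussianPDFReal 0 1).integrableOn
          (hint.const_mul s⁻¹).integrableOn measurableSet_Ioi (fun x hx => ?_)
        have hx1 : s ≤ x := le_of_lt hx
        rw [pdf_eq]
        have hxs : 1 ≤ s⁻¹ * x := by
          rw [inv_mul_eq_div, le_div_iff₀ hs0]; simpa using hx1
        have hnn : 0 ≤ (√(2 * π))⁻¹ * rexp (- x ^ 2 / 2) := by positivity
        calc (√(2 * π))⁻¹ * rexp (- (x - 0) ^ 2 / 2)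
            = (√(2 * π))⁻¹ * rexp (- x ^ 2 / 2) := by norm_num
          _ ≤ (s⁻¹ * x) * ((√(2 * π))⁻¹ * rexp (- x ^ 2 / 2)) := le_mul_of_one_le_left hnn hxs
          _ = s⁻¹ * (x * ((√(2 * π))⁻¹ * rexp (- x ^ 2 / 2))) := by ring
    _ = s⁻¹ * ∫ x in Set.Ioi s, x * ((√(2 * π))⁻¹ * rexp (- x ^ 2 / 2)) := by
        rw [integral_const_mul]
    _ = gaussianPDFReal 0 1 s / s := by
        rw [integral_Ioi_x_pdf, pdf_eq]
        norm_num
        ring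


/-- `G η t = P(N(η,1) < t)`. -/
noncomputable def Gm (η : ℝ) (t : ℝ) : ℝ≥0∞ := gaussianReal η 1 (Set.Iio t)

lemma Gm_mono (η : ℝ) : Monotone (Gm η) := fun a b hab => measure_mono (Set.Iio_subset_Iio hab)

lemma Gm_measurable (η : ℝ) : Measurable (Gm η) := (Gm_mono η).measurable

lemma Gm_pos (η t : ℝ) : Gm η t ≠ 0 :=
  gauss_ne_zero η (sub_one_lt t) (fun x hx => hx.2)

lemma Gm_le_one (η t : ℝ) : Gm η t ≤ 1 := prob_le_one

lemma Gm_ne_top (η t : ℝ) : Gm η t ≠ ⊤ := ((Gm_le_one η t).trans_lt ENNReal.one_lt_top).ne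

noncomputable def Am (η θ₀ q : ℝ) : ℝ≥0∞ := ∫⁻ y in Set.Iic q, Gm η y ∂(gaussianReal θ₀ 1)
noncomputable def Bm (η θ₀ q : ℝ) : ℝ≥0∞ := ∫⁻ y in Set.Ioi q, Gm η y ∂(gaussianReal θ₀ 1)
noncomputable def Tm (η θ₀ : ℝ) : ℝ≥0∞ := ∫⁻ y, Gm η y ∂(gaussianReal θ₀ 1)

lemma prod_S_eq (η θ₀ : ℝ) :
    ((gaussianReal η 1).prod (gaussianReal θ₀ 1)) {ω : ℝ × ℝ | ω.1 < ω.2} = Tm η θ₀ := by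
  rw [Measure.prod_apply_symm measurableSet_S]
  rfl

lemma prod_S_inter_eq (η θ₀ q : ℝ) :
    ((gaussianReal η 1).prod (gaussianReal θ₀ 1))
      ({ω : ℝ × ℝ | ω.1 < ω.2} ∩ Prod.snd ⁻¹' (Set.Iic q)) = Am η θ₀ q := by
  rw [Measure.prod_apply_symm (measurableSet_S.inter (measurable_snd measurableSet_Iic))]
  have : ∀ y : ℝ, gaussianReal η 1 ((fun x => (x, y)) ⁻¹' ({ω : ℝ × ℝ | ω.1 < ω.2} ∩ Prod.snd ⁻¹' (Set.Iic q)))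
      = Set.indicator (Set.Iic q) (fun y => Gm η y) y := by
    intro y
    by_cases hy : y ≤ q
    · rw [Set.indicator_of_mem (Set.mem_Iic.mpr hy)]
      congr 1
      ext x
      simp [hy, Gm]
    · rw [Set.indicator_of_notMem (by simpa using hy)]
      convert measure_empty
      · ext x; simp [hy]
      · infer_instance
  simp_rw [this]
  rw [lintegral_indicator measurableSet_Iic]
  rfl


lemma Tm_ne_zero (η θ₀ : ℝ) : Tm η θ₀ ≠ 0 := by
  rw [← prod_S_eq]
  intro h
  have hsub : (Set.Iio η) ×ˢ (Set.Ioi η) ⊆ {ω : ℝ × ℝ | ω.1 < ω.2} := by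
    rintro ⟨x, y⟩ ⟨hx, hy⟩
    exact lt_trans (show x < η from hx) (show η < y from hy)
  have h0 : ((gaussianReal η 1).prod (gaussianReal θ₀ 1)) ((Set.Iio η) ×ˢ (Set.Ioi η)) = 0 :=
    le_antisymm (h ▸ measure_mono hsub) (zero_le)
  rw [Measure.prod_prod] at h0
  rcases mul_eq_zero.mp h0 with h1 | h1
  · exact gauss_ne_zero η (sub_one_lt η) (fun x hx => hx.2) h1
  · exact gauss_ne_zero θ₀ (lt_add_one η) (fun x hx => hx.1) h1

lemma Tm_le_one (η θ₀ : ℝ) : Tm η θ₀ ≤ 1 := by rw [← prod_S_eq]; exact prob_le_one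

lemma Tm_ne_top (η θ₀ : ℝ) : Tm η θ₀ ≠ ⊤ := ((Tm_le_one η θ₀).trans_lt ENNReal.one_lt_top).ne

lemma marg_Iic (η θ₀ q : ℝ) :
    ((selLaw η θ₀).map Prod.snd) (Set.Iic q) = (Tm η θ₀)⁻¹ * Am η θ₀ q := by
  rw [selLaw, ProbabilityTheory.cond, Measure.map_smul, Measure.smul_apply, smul_eq_mul,
    Measure.map_apply measurable_snd measurableSet_Iic,
    Measure.restrict_apply (measurable_snd measurableSet_Iic), prod_S_eq]
  rw [Set.inter_comm, prod_S_inter_eq]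

lemma Am_mono (η θ₀ : ℝ) {q q' : ℝ} (h : q ≤ q') : Am η θ₀ q ≤ Am η θ₀ q' :=
  lintegral_mono_set (Set.Iic_subset_Iic.mpr h)

lemma Bm_anti (η θ₀ : ℝ) {q q' : ℝ} (h : q ≤ q') : Bm η θ₀ q' ≤ Bm η θ₀ q :=
  lintegral_mono_set (Set.Ioi_subset_Ioi h)

lemma Am_add_Bm (η θ₀ q : ℝ) : Am η θ₀ q + Bm η θ₀ q = Tm η θ₀ := by
  have h := lintegral_add_compl (μ := gaussianReal θ₀ 1) (Gm η) (measurableSet_Iic (a := q))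
  rw [Set.compl_Iic] at h
  exact h

lemma Am_le_Tm (η θ₀ q : ℝ) : Am η θ₀ q ≤ Tm η θ₀ :=
  (Am_add_Bm η θ₀ q) ▸ le_self_add

lemma Am_ne_top (η θ₀ q : ℝ) : Am η θ₀ q ≠ ⊤ :=
  ((Am_le_Tm η θ₀ q).trans_lt (Tm_ne_top η θ₀).lt_top).ne


lemma gauss_shift' (m : ℝ) {s : Set ℝ} (hs : MeasurableSet s) :
    gaussianReal m 1 s = gaussianReal 0 1 ((· + m) ⁻¹' s) := by
  have h := gaussianReal_map_add_const (μ := 0) (v := 1) m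
  rw [zero_add] at h
  rw [← h, Measure.map_apply (measurable_add_const m) hs]

lemma gauss_shift_Iic (m y : ℝ) :
    gaussianReal m 1 (Set.Iic y) = gaussianReal 0 1 (Set.Iic (y - m)) := by
  rw [gauss_shift' m measurableSet_Iic]
  congr 1
  ext x
  simp [le_sub_iff_add_le]

lemma gauss_shift_Ioi (m y : ℝ) :
    gaussianReal m 1 (Set.Ioi y) = gaussianReal 0 1 (Set.Ioi (y - m)) := by
  rw [gauss_shift' m measurableSet_Ioi]
  congr 1
  ext x
  simp [lt_sub_iff_add_lt]

lemma gauss_shift_Ioo (m a b : ℝ) :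
    gaussianReal m 1 (Set.Ioo a b) = gaussianReal 0 1 (Set.Ioo (a - m) (b - m)) := by
  rw [gauss_shift' m measurableSet_Ioo]
  congr 1
  ext x
  simp [lt_sub_iff_add_lt, sub_lt_iff_lt_add]

lemma gauss_Ioi_ge (c' : ℝ) :
    1 - gaussianReal 0 1 (Set.Iic c') ≤ gaussianReal 0 1 (Set.Ioi c') := by
  have h := measure_compl (μ := gaussianReal 0 1) (measurableSet_Iic (a := c')) (measure_ne_top _ _)
  rw [Set.compl_Iic, measure_univ] at h
  exact h.ge

/-- If `y - θ₀ ≤ c'` where the standard normal mass below `c'` is `< α/4`, then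
`Am η θ₀ y < (α/2) Tm η θ₀`. -/
lemma claim1 {α : ℝ} (η : ℝ) (hα : 0 < α) (hα1 : α < 1) {c' : ℝ}
    (hc' : gaussianReal 0 1 (Set.Iic c') < ENNReal.ofReal (α / 4))
    {θ₀ y : ℝ} (hyθ : y - θ₀ ≤ c') :
    Am η θ₀ y < ENNReal.ofReal (α / 2) * Tm η θ₀ := by
  have hGy0 := Gm_pos η y
  have hGyt := Gm_ne_top η y
  have h1 : Am η θ₀ y ≤ Gm η y * gaussianReal θ₀ 1 (Set.Iic y) := by
    calc Am η θ₀ y ≤ ∫⁻ _ in Set.Iic y, Gm η y ∂(gaussianReal θ₀ 1) :=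
          setLIntegral_mono measurable_const (fun t ht => Gm_mono η ht)
      _ = Gm η y * gaussianReal θ₀ 1 (Set.Iic y) := setLIntegral_const _ _
  have h2 : gaussianReal θ₀ 1 (Set.Iic y) < ENNReal.ofReal (α / 4) := by
    rw [gauss_shift_Iic]
    exact lt_of_le_of_lt (measure_mono (Set.Iic_subset_Iic.mpr hyθ)) hc'
  have h3 : Am η θ₀ y < Gm η y * ENNReal.ofReal (α / 4) :=
    lt_of_le_of_lt h1 ((ENNReal.mul_lt_mul_right hGy0 hGyt) h2)
  have h4 : Gm η y * ENNReal.ofReal (1/2) ≤ Tm η θ₀ := by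
    have hmass : ENNReal.ofReal (1/2 : ℝ) ≤ gaussianReal θ₀ 1 (Set.Ioi y) := by
      rw [gauss_shift_Ioi]
      refine le_trans ?_ (le_trans (gauss_Ioi_ge c') (measure_mono (Set.Ioi_subset_Ioi hyθ)))
      have hq : gaussianReal 0 1 (Set.Iic c') ≤ ENNReal.ofReal (1/2) :=
        le_trans hc'.le (ENNReal.ofReal_le_ofReal (by linarith))
      calc ENNReal.ofReal (1/2:ℝ) = 1 - ENNReal.ofReal (1/2:ℝ) := by
            rw [← ENNReal.ofReal_one, ← ENNReal.ofReal_sub _ (by norm_num)]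
            norm_num
        _ ≤ 1 - gaussianReal 0 1 (Set.Iic c') := tsub_le_tsub_left hq 1
    calc Gm η y * ENNReal.ofReal (1/2)
        ≤ Gm η y * gaussianReal θ₀ 1 (Set.Ioi y) := mul_le_mul_right hmass _
      _ = ∫⁻ _ in Set.Ioi y, Gm η y ∂(gaussianReal θ₀ 1) := (setLIntegral_const _ _).symm
      _ ≤ ∫⁻ t in Set.Ioi y, Gm η t ∂(gaussianReal θ₀ 1) :=
          setLIntegral_mono (Gm_measurable η) (fun t ht => Gm_mono η (le_of_lt ht))
      _ ≤ Tm η θ₀ := setLIntegral_le_lintegral _ _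
  have h5 : Gm η y * ENNReal.ofReal (α/4)
      = ENNReal.ofReal (α/2) * (Gm η y * ENNReal.ofReal (1/2)) := by
    rw [show (α/4 : ℝ) = (α/2)*(1/2) by ring, ENNReal.ofReal_mul (by linarith : (0:ℝ) ≤ α/2)]
    ring
  rw [h5] at h3
  exact lt_of_lt_of_le h3 (mul_le_mul_right h4 _)

/-- If `y - θ₀` is large (depending on `Gm η (y-1)`), then `Bm η θ₀ y < (α/2) Tm η θ₀`. -/
lemma claim2 {α : ℝ} (η : ℝ) (hα : 0 < α) {θ₀ y : ℝ}
    (hs1 : 1 ≤ y - θ₀) (hs2 : 2 / (α * (Gm η (y-1)).toReal) < y - θ₀) :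
    Bm η θ₀ y < ENNReal.ofReal (α / 2) * Tm η θ₀ := by
  set s := y - θ₀ with hsdef
  have hs0 : (0:ℝ) < s := lt_of_lt_of_le one_pos hs1
  set gr := (Gm η (y-1)).toReal with hgr
  have hgr0 : 0 < gr := ENNReal.toReal_pos (Gm_pos η (y-1)) (Gm_ne_top η (y-1))
  have hpdf0 : 0 < gaussianPDFReal 0 1 s := gaussianPDFReal_pos 0 1 s one_ne_zero
  -- upper bound for B
  have h1 : Bm η θ₀ y ≤ ENNReal.ofReal (gaussianPDFReal 0 1 s / s) := by
    calc Bm η θ₀ y ≤ ∫⁻ _ in Set.Ioi y, 1 ∂(gaussianReal θ₀ 1) :=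
          setLIntegral_mono measurable_const (fun t _ => Gm_le_one η t)
      _ = gaussianReal θ₀ 1 (Set.Ioi y) := setLIntegral_one _
      _ = gaussianReal 0 1 (Set.Ioi s) := gauss_shift_Ioi θ₀ y
      _ ≤ ENNReal.ofReal (gaussianPDFReal 0 1 s / s) := gauss_mills hs1
  -- lower bound for T
  have h2 : Gm η (y-1) * ENNReal.ofReal (gaussianPDFReal 0 1 s) ≤ Tm η θ₀ := by
    have hmass : ENNReal.ofReal (gaussianPDFReal 0 1 s) ≤ gaussianReal θ₀ 1 (Set.Ioo (y-1) y) := by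
      rw [gauss_shift_Ioo]
      have h := gauss_Ioo_ge (m := 0) (c := gaussianPDFReal 0 1 s) (a := y - 1 - θ₀) (b := y - θ₀)
        (fun x hx => ?_)
      · have : (y - θ₀ - (y - 1 - θ₀) : ℝ) = 1 := by ring
        rw [this] at h
        simpa using h
      · -- density lower bound on the interval
        rw [pdf_eq, pdf_eq]
        have hx1 : s - 1 < x := by rw [hsdef]; linarith [hx.1]
        have hx2 : x < s := hx.2
        have hxpos : 0 ≤ x := by linarith
        have hsq : (x - 0)^2 ≤ (s - 0)^2 := by nlinarith
        exact mul_le_mul_of_nonneg_left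
          (Real.exp_le_exp.mpr (by nlinarith)) (by positivity)
    calc Gm η (y-1) * ENNReal.ofReal (gaussianPDFReal 0 1 s)
        ≤ Gm η (y-1) * gaussianReal θ₀ 1 (Set.Ioo (y-1) y) := mul_le_mul_right hmass _
      _ = ∫⁻ _ in Set.Ioo (y-1) y, Gm η (y-1) ∂(gaussianReal θ₀ 1) := (setLIntegral_const _ _).symm
      _ ≤ ∫⁻ t in Set.Ioo (y-1) y, Gm η t ∂(gaussianReal θ₀ 1) :=
          setLIntegral_mono (Gm_measurable η) (fun t ht => Gm_mono η (le_of_lt ht.1))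
      _ ≤ Tm η θ₀ := setLIntegral_le_lintegral _ _
  -- strict middle inequality
  have h3 : ENNReal.ofReal (gaussianPDFReal 0 1 s / s)
      < ENNReal.ofReal (α/2) * (Gm η (y-1) * ENNReal.ofReal (gaussianPDFReal 0 1 s)) := by
    have hG : Gm η (y-1) = ENNReal.ofReal gr := (ENNReal.ofReal_toReal (Gm_ne_top η (y-1))).symm
    rw [hG, ← ENNReal.ofReal_mul (by positivity : (0:ℝ) ≤ gr),
      ← ENNReal.ofReal_mul (by linarith : (0:ℝ) ≤ α/2)]
    apply ENNReal.ofReal_lt_ofReal_iff_of_nonneg (by positivity) |>.mpr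
    have hss : 2 / (α * gr) < s := hs2
    have h2s : 2 < s * (α * gr) := by
      rw [div_lt_iff₀ (by positivity)] at hss
      linarith
    rw [div_lt_iff₀ hs0]
    nlinarith [mul_lt_mul_of_pos_left h2s hpdf0]
  calc Bm η θ₀ y ≤ ENNReal.ofReal (gaussianPDFReal 0 1 s / s) := h1
    _ < ENNReal.ofReal (α/2) * (Gm η (y-1) * ENNReal.ofReal (gaussianPDFReal 0 1 s)) := h3
    _ ≤ ENNReal.ofReal (α/2) * Tm η θ₀ := mul_le_mul_right h2 _

lemma Am_eq_of_marg {η θ₀ q : ℝ} {r : ℝ≥0∞}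
    (h : ((selLaw η θ₀).map Prod.snd) (Set.Iic q) = r) :
    Am η θ₀ q = r * Tm η θ₀ := by
  rw [marg_Iic] at h
  calc Am η θ₀ q = (Tm η θ₀ * (Tm η θ₀)⁻¹) * Am η θ₀ q := by
        rw [ENNReal.mul_inv_cancel (Tm_ne_zero η θ₀) (Tm_ne_top η θ₀), one_mul]
    _ = Tm η θ₀ * ((Tm η θ₀)⁻¹ * Am η θ₀ q) := by rw [mul_assoc]
    _ = Tm η θ₀ * r := by rw [h]
    _ = r * Tm η θ₀ := mul_comm _ _

lemma Bm_eq_of_marg {α η θ₀ q : ℝ} (hα : 0 < α) (hα1 : α < 1)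
    (h : ((selLaw η θ₀).map Prod.snd) (Set.Iic q) = ENNReal.ofReal (1 - α/2)) :
    Bm η θ₀ q = ENNReal.ofReal (α/2) * Tm η θ₀ := by
  have hA := Am_eq_of_marg h
  have hT := Am_add_Bm η θ₀ q
  have hone : (1:ℝ≥0∞) = ENNReal.ofReal (1 - α/2) + ENNReal.ofReal (α/2) := by
    rw [← ENNReal.ofReal_add (by linarith) (by linarith)]
    norm_num
  have hsum : Am η θ₀ q + Bm η θ₀ q
      = ENNReal.ofReal (1 - α/2) * Tm η θ₀ + ENNReal.ofReal (α/2) * Tm η θ₀ := by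
    rw [hT, ← add_mul, ← hone, one_mul]
  rw [hA] at hsum
  exact (ENNReal.add_right_inj
    (ENNReal.mul_ne_top ENNReal.ofReal_ne_top (Tm_ne_top η θ₀))).mp hsum

lemma region_subset {α : ℝ} (η : ℝ) (hα : 0 < α) (hα1 : α < 1) {c' : ℝ}
    (hc' : gaussianReal 0 1 (Set.Iic c') < ENNReal.ofReal (α / 4))
    {l u : ℝ → ℝ}
    (hl : ∀ θ₀ : ℝ, ((selLaw η θ₀).map Prod.snd) (Set.Iic (l θ₀)) = ENNReal.ofReal (α / 2))
    (hu : ∀ θ₀ : ℝ, ((selLaw η θ₀).map Prod.snd) (Set.Iic (u θ₀)) = ENNReal.ofReal (1 - α / 2))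
    (y : ℝ) :
    {θ₀ : ℝ | l θ₀ ≤ y ∧ y ≤ u θ₀}
      ⊆ Set.Icc (y - 1 - 2/(α * (Gm η (y-1)).toReal)) (y - c') := by
  rintro θ₀ ⟨h1, h2⟩
  have hgr0 : 0 < (Gm η (y-1)).toReal :=
    ENNReal.toReal_pos (Gm_pos η (y-1)) (Gm_ne_top η (y-1))
  constructor
  · by_contra hcon
    push_neg at hcon
    have hpos : 0 < 2/(α * (Gm η (y-1)).toReal) := by positivity
    have hs1 : 1 ≤ y - θ₀ := by linarith
    have hs2 : 2 / (α * (Gm η (y-1)).toReal) < y - θ₀ := by linarith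
    have hB := claim2 η hα hs1 hs2
    rw [← Bm_eq_of_marg hα hα1 (hu θ₀)] at hB
    exact absurd (Bm_anti η θ₀ h2) (not_le.mpr hB)
  · by_contra hcon
    push_neg at hcon
    have hA := claim1 η hα hα1 hc' (le_of_lt (by linarith : y - θ₀ < c'))
    rw [← Am_eq_of_marg (hl θ₀)] at hA
    exact absurd (Am_mono η θ₀ h1) (not_le.mpr hA)

lemma exists_c' {α : ℝ} (hα : 0 < α) :
    ∃ c' : ℝ, gaussianReal 0 1 (Set.Iic c') < ENNReal.ofReal (α / 4) := by
  have h1 : Filter.Tendsto (fun x : ℝ => gaussianReal 0 1 (Set.Ici x)) atBot (nhds 1) := by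
    have := tendsto_measure_Ici_atBot (gaussianReal 0 1)
    rwa [measure_univ] at this
  have h1' : Filter.Tendsto (fun x : ℝ => gaussianReal 0 1 (Set.Ici (x+1))) atBot (nhds 1) :=
    h1.comp (tendsto_atBot_add_const_right atBot 1 tendsto_id)
  have h2 : Filter.Tendsto (fun x : ℝ => 1 - gaussianReal 0 1 (Set.Ici (x+1))) atBot (nhds 0) := by
    have hc : Filter.Tendsto (fun z : ℝ≥0∞ => 1 - z) (nhds 1) (nhds (1 - 1)) :=
      (ENNReal.continuous_sub_left ENNReal.one_ne_top).continuousAt.tendsto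
    simpa [Function.comp_def] using hc.comp h1'
  have hle : ∀ x : ℝ, gaussianReal 0 1 (Set.Iic x) ≤ 1 - gaussianReal 0 1 (Set.Ici (x+1)) := by
    intro x
    have hcompl := measure_compl (μ := gaussianReal 0 1) (measurableSet_Ici (a := x+1))
      (measure_ne_top _ _)
    rw [Set.compl_Ici, measure_univ] at hcompl
    rw [← hcompl]
    exact measure_mono (fun t ht => lt_of_le_of_lt ht (lt_add_one x))
  have h3 : Filter.Tendsto (fun x : ℝ => gaussianReal 0 1 (Set.Iic x)) atBot (nhds 0) := by
    refine tendsto_of_tendsto_of_tendsto_of_le_of_le tendsto_const_nhds h2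
      (fun x => zero_le) hle
  have hev := h3.eventually_lt_const (by simp [ENNReal.ofReal_pos]; linarith :
    (0:ℝ≥0∞) < ENNReal.ofReal (α/4))
  exact hev.exists

/-- ratio bound: `G(y) ≤ (κ⁻¹ + 1 + e^{2(η-y)+4}) G(y-1)`. -/
lemma ratio_bound (η y : ℝ) :
    Gm η y ≤ ENNReal.ofReal ((Gm η η).toReal⁻¹ + 1 + rexp (2*(η-y)+4)) * Gm η (y-1) := by
  set κr := (Gm η η).toReal with hκ
  have hκ0 : 0 < κr := ENNReal.toReal_pos (Gm_pos η η) (Gm_ne_top η η)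
  have hexp : (0:ℝ) < rexp (2*(η-y)+4) := Real.exp_pos _
  by_cases hy : η + 1 ≤ y
  · calc Gm η y ≤ 1 := Gm_le_one η y
      _ = ENNReal.ofReal (κr⁻¹) * ENNReal.ofReal κr := by
          rw [← ENNReal.ofReal_mul (by positivity), inv_mul_cancel₀ (ne_of_gt hκ0),
            ENNReal.ofReal_one]
      _ ≤ ENNReal.ofReal (κr⁻¹ + 1 + rexp (2*(η-y)+4)) * Gm η (y-1) := by
          refine mul_le_mul' (ENNReal.ofReal_le_ofReal (by linarith)) ?_
          rw [ENNReal.ofReal_toReal (Gm_ne_top η η)]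
          exact Gm_mono η (by linarith)
  · push_neg at hy
    have hy1 : y - 1 ≤ η := by linarith
    -- split Iio y
    have hsplit : Gm η y = Gm η (y-1) + gaussianReal η 1 (Set.Ico (y-1) y) := by
      have hset : Set.Iio y = Set.Iio (y-1) ∪ Set.Ico (y-1) y := by
        ext x
        simp only [Set.mem_Iio, Set.mem_union, Set.mem_Ico]
        constructor
        · intro h
          rcases lt_or_ge x (y-1) with h2 | h2
          · exact Or.inl h2
          · exact Or.inr ⟨h2, h⟩
        · rintro (h | ⟨_, h⟩)
          · linarith
          · exact h
      rw [Gm, hset]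
      exact measure_union
        (Set.disjoint_left.mpr (fun x hx hx2 => absurd hx2.1 (not_le.mpr hx)))
        measurableSet_Ico
    -- upper bound for increment
    have hup : gaussianReal η 1 (Set.Ico (y-1) y)
        ≤ ENNReal.ofReal (rexp (2*(η-y)+4)) * Gm η (y-1) := by
      have hC : ∀ x ∈ Set.Ico (y-1) y,
          gaussianPDFReal η 1 x ≤ gaussianPDFReal η 1 (min y η) := by
        intro x hx
        rw [pdf_eq, pdf_eq]
        refine mul_le_mul_of_nonneg_left (Real.exp_le_exp.mpr ?_) (by positivity)
        rcases le_total y η with h | h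
        · rw [min_eq_left h]
          have : x < y := hx.2
          nlinarith
        · rw [min_eq_right h]
          nlinarith
      have h1 := gauss_Ico_le η hC
      rw [show (y - (y-1) : ℝ) = 1 by ring, ENNReal.ofReal_one, mul_one] at h1
      -- pdfmax ≤ exp(2(η-y)+4) * pdf(y-2)
      have h2 : gaussianPDFReal η 1 (min y η)
          ≤ rexp (2*(η-y)+4) * gaussianPDFReal η 1 (y-2) := by
        rw [pdf_eq, pdf_eq]
        rw [show rexp (2*(η-y)+4) * ((√(2 * π))⁻¹ * rexp (-(y-2-η)^2/2))
            = (√(2 * π))⁻¹ * rexp ((2*(η-y)+4) + (-(y-2-η)^2/2)) by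
            rw [mul_left_comm, ← Real.exp_add]]
        refine mul_le_mul_of_nonneg_left (Real.exp_le_exp.mpr ?_) (by positivity)
        rcases le_total y η with h | h
        · rw [min_eq_left h]; nlinarith
        · rw [min_eq_right h]; nlinarith
      -- pdf(y-2) lower-bounds G(y-1)
      have h3 : ENNReal.ofReal (gaussianPDFReal η 1 (y-2)) ≤ Gm η (y-1) := by
        have hlow := gauss_Ioo_ge η (c := gaussianPDFReal η 1 (y-2)) (a := y-2) (b := y-1)
          (fun x hx => ?_)
        · rw [show (y-1-(y-2) : ℝ) = 1 by ring, ENNReal.ofReal_one, mul_one] at hlow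
          exact le_trans hlow (measure_mono (fun x hx => lt_of_lt_of_le hx.2 (by linarith)))
        · rw [pdf_eq, pdf_eq]
          refine mul_le_mul_of_nonneg_left (Real.exp_le_exp.mpr ?_) (by positivity)
          have h1' : y - 2 < x := hx.1
          have h2' : x < y - 1 := hx.2
          nlinarith
      calc gaussianReal η 1 (Set.Ico (y-1) y) ≤ ENNReal.ofReal (gaussianPDFReal η 1 (min y η)) := h1
        _ ≤ ENNReal.ofReal (rexp (2*(η-y)+4) * gaussianPDFReal η 1 (y-2)) :=
            ENNReal.ofReal_le_ofReal h2
        _ = ENNReal.ofReal (rexp (2*(η-y)+4)) * ENNReal.ofReal (gaussianPDFReal η 1 (y-2)) :=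
            ENNReal.ofReal_mul (by positivity)
        _ ≤ ENNReal.ofReal (rexp (2*(η-y)+4)) * Gm η (y-1) := mul_le_mul_right h3 _
    calc Gm η y = Gm η (y-1) + gaussianReal η 1 (Set.Ico (y-1) y) := hsplit
      _ ≤ Gm η (y-1) + ENNReal.ofReal (rexp (2*(η-y)+4)) * Gm η (y-1) := add_le_add_right hup _
      _ = (1 + ENNReal.ofReal (rexp (2*(η-y)+4))) * Gm η (y-1) := by rw [add_mul, one_mul]
      _ ≤ ENNReal.ofReal (κr⁻¹ + 1 + rexp (2*(η-y)+4)) * Gm η (y-1) := by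
          refine mul_le_mul_left ?_ _
          rw [← ENNReal.ofReal_one, ← ENNReal.ofReal_add (by norm_num) (by positivity)]
          exact ENNReal.ofReal_le_ofReal (by nlinarith [inv_pos.mpr hκ0])

/-- exponential moment of the Gaussian. -/
lemma exp_moment (a θ : ℝ) :
    ∫⁻ y, ENNReal.ofReal (rexp (a - 2*y)) ∂(gaussianReal θ 1)
      = ENNReal.ofReal (rexp (a - 2*θ + 2)) := by
  have hg : Measurable fun y : ℝ => ENNReal.ofReal (rexp (a - 2*y)) := by
    apply Measurable.ennreal_ofReal
    fun_prop
  rw [gaussianReal_of_var_ne_zero θ one_ne_zero,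
    lintegral_withDensity_eq_lintegral_mul _ (measurable_gaussianPDF θ 1) hg]
  have hpt : ∀ y : ℝ, (gaussianPDF θ 1 * fun y => ENNReal.ofReal (rexp (a - 2*y))) y
      = ENNReal.ofReal (rexp (a - 2*θ + 2)) * gaussianPDF (θ-2) 1 y := by
    intro y
    simp only [Pi.mul_apply, gaussianPDF]
    rw [← ENNReal.ofReal_mul (gaussianPDFReal_nonneg θ 1 y),
      ← ENNReal.ofReal_mul (Real.exp_nonneg _)]
    congr 1
    rw [pdf_eq, pdf_eq]
    rw [show (√(2 * π))⁻¹ * rexp (-(y-θ)^2/2) * rexp (a - 2*y)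
        = (√(2 * π))⁻¹ * rexp (-(y-θ)^2/2 + (a - 2*y)) by rw [mul_assoc, ← Real.exp_add]]
    rw [show rexp (a - 2*θ + 2) * ((√(2 * π))⁻¹ * rexp (-(y-(θ-2))^2/2))
        = (√(2 * π))⁻¹ * rexp ((a - 2*θ + 2) + (-(y-(θ-2))^2/2)) by
        rw [mul_left_comm, ← Real.exp_add]]
    congr 1
    ring
  simp_rw [hpt]
  rw [lintegral_const_mul _ (measurable_gaussianPDF (θ-2) 1),
    lintegral_gaussianPDF_eq_one (θ-2) one_ne_zero, mul_one]

end OracleAux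

end OracleAuxSection

open OracleAux Set Real Filter
open scoped ENNReal NNReal

/-- The oracle confidence interval has finite selective expected width (Theorem 4).
Here `l θ₀` and `u θ₀` are the `α/2` and `1 - α/2` quantiles of the marginal distribution
of `Y` under the selective law `P_{η,θ₀}`, and the oracle confidence set is
`D(y) = {θ₀ : l θ₀ ≤ y ≤ u θ₀}`. -/
theorem oracle_interval_finite_selective_expected_width
    (α : ℝ) (hα : 0 < α) (hα1 : α < 1) (η : ℝ)
    (l u : ℝ → ℝ)
    (hl : ∀ θ₀ : ℝ, ((selLaw η θ₀).map Prod.snd) (Set.Iic (l θ₀)) = ENNReal.ofReal (α / 2))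
    (hu : ∀ θ₀ : ℝ, ((selLaw η θ₀).map Prod.snd) (Set.Iic (u θ₀)) = ENNReal.ofReal (1 - α / 2)) :
    ∀ θ : ℝ,
      ∫⁻ ω, volume {θ₀ : ℝ | l θ₀ ≤ ω.2 ∧ ω.2 ≤ u θ₀} ∂(selLaw η θ) ≠ ⊤ := by
  intro θ
  obtain ⟨c', hc'⟩ := exists_c' hα
  set W : ℝ → ℝ≥0∞ := fun y =>
    ENNReal.ofReal |1 - c'| + ENNReal.ofReal (2/α) * (Gm η (y-1))⁻¹ with hW
  have hGmeas : Measurable fun y : ℝ => Gm η (y-1) :=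
    (Gm_measurable η).comp (measurable_id.sub_const 1)
  have hWmeas : Measurable W := measurable_const.add (measurable_const.mul hGmeas.inv)
  -- pointwise bound on the region volume
  have hpt : ∀ y : ℝ, volume {θ₀ : ℝ | l θ₀ ≤ y ∧ y ≤ u θ₀} ≤ W y := by
    intro y
    have hgr0 : 0 < (Gm η (y-1)).toReal :=
      ENNReal.toReal_pos (Gm_pos η (y-1)) (Gm_ne_top η (y-1))
    calc volume {θ₀ : ℝ | l θ₀ ≤ y ∧ y ≤ u θ₀}
        ≤ volume (Set.Icc (y - 1 - 2/(α * (Gm η (y-1)).toReal)) (y - c')) :=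
          measure_mono (region_subset η hα hα1 hc' hl hu y)
      _ = ENNReal.ofReal ((y - c') - (y - 1 - 2/(α * (Gm η (y-1)).toReal))) := Real.volume_Icc
      _ = ENNReal.ofReal ((1 - c') + 2/(α * (Gm η (y-1)).toReal)) := by congr 1; ring
      _ ≤ ENNReal.ofReal (|1 - c'| + 2/(α * (Gm η (y-1)).toReal)) :=
          ENNReal.ofReal_le_ofReal (by gcongr; exact le_abs_self _)
      _ = ENNReal.ofReal |1 - c'| + ENNReal.ofReal (2/(α * (Gm η (y-1)).toReal)) :=
          ENNReal.ofReal_add (abs_nonneg _) (by positivity)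
      _ = W y := by
          rw [hW]
          congr 1
          rw [show (2/(α * (Gm η (y-1)).toReal) : ℝ)
              = (2/α) * ((Gm η (y-1)).toReal)⁻¹ by
              field_simp
            , ENNReal.ofReal_mul (by positivity), ENNReal.ofReal_inv_of_pos hgr0,
            ENNReal.ofReal_toReal (Gm_ne_top η (y-1))]
  -- finiteness of the weighted integral
  have hratio : ∀ y : ℝ, (Gm η (y-1))⁻¹ * Gm η y
      ≤ ENNReal.ofReal ((Gm η η).toReal⁻¹ + 1 + rexp (2*(η-y)+4)) := by
    intro y
    calc (Gm η (y-1))⁻¹ * Gm η y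
        ≤ (Gm η (y-1))⁻¹ * (ENNReal.ofReal ((Gm η η).toReal⁻¹ + 1 + rexp (2*(η-y)+4))
            * Gm η (y-1)) := mul_le_mul_right (ratio_bound η y) _
      _ = ENNReal.ofReal ((Gm η η).toReal⁻¹ + 1 + rexp (2*(η-y)+4))
            * ((Gm η (y-1))⁻¹ * Gm η (y-1)) := by ring
      _ ≤ ENNReal.ofReal ((Gm η η).toReal⁻¹ + 1 + rexp (2*(η-y)+4)) := by
          rw [ENNReal.inv_mul_cancel (Gm_pos η (y-1)) (Gm_ne_top η (y-1)), mul_one]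
  have hbound : ∀ y : ℝ, W y * Gm η y
      ≤ ENNReal.ofReal |1 - c'|
        + ENNReal.ofReal (2/α)
          * ENNReal.ofReal ((Gm η η).toReal⁻¹ + 1 + rexp (2*(η-y)+4)) := by
    intro y
    rw [hW, add_mul]
    refine add_le_add ?_ ?_
    · calc ENNReal.ofReal |1 - c'| * Gm η y ≤ ENNReal.ofReal |1 - c'| * 1 :=
          mul_le_mul_right (Gm_le_one η y) _
        _ = ENNReal.ofReal |1 - c'| := mul_one _
    · rw [mul_assoc]
      exact mul_le_mul_right (hratio y) _
  have hfin : ∫⁻ y, W y * Gm η y ∂(gaussianReal θ 1) ≠ ⊤ := by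
    have hle := lintegral_mono (μ := gaussianReal θ 1) hbound
    refine ne_top_of_le_ne_top ?_ hle
    have hmeas2 : Measurable fun y : ℝ =>
        ENNReal.ofReal ((Gm η η).toReal⁻¹ + 1 + rexp (2*(η-y)+4)) := by
      apply Measurable.ennreal_ofReal
      fun_prop
    rw [lintegral_add_left measurable_const, lintegral_const, measure_univ, mul_one,
      lintegral_const_mul _ hmeas2]
    have hsplit : ∀ y : ℝ, ENNReal.ofReal ((Gm η η).toReal⁻¹ + 1 + rexp (2*(η-y)+4))
        = ENNReal.ofReal ((Gm η η).toReal⁻¹ + 1)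
          + ENNReal.ofReal (rexp ((2*η+4) - 2*y)) := by
      intro y
      rw [← ENNReal.ofReal_add (by positivity) (by positivity)]
      congr 1
      rw [show (2*η+4) - 2*y = 2*(η-y)+4 by ring]
    simp_rw [hsplit]
    rw [lintegral_add_left measurable_const, lintegral_const, measure_univ, mul_one,
      exp_moment (2*η+4) θ]
    exact ENNReal.add_ne_top.mpr ⟨ENNReal.ofReal_ne_top,
      ENNReal.mul_ne_top ENNReal.ofReal_ne_top
        (ENNReal.add_ne_top.mpr ⟨ENNReal.ofReal_ne_top, ENNReal.ofReal_ne_top⟩)⟩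
  -- put everything together
  have hmain : ∫⁻ ω, volume {θ₀ : ℝ | l θ₀ ≤ ω.2 ∧ ω.2 ≤ u θ₀} ∂(selLaw η θ)
      ≤ (Tm η θ)⁻¹ * ∫⁻ y, W y * Gm η y ∂(gaussianReal θ 1) := by
    calc ∫⁻ ω, volume {θ₀ : ℝ | l θ₀ ≤ ω.2 ∧ ω.2 ≤ u θ₀} ∂(selLaw η θ)
        ≤ ∫⁻ ω, W ω.2 ∂(selLaw η θ) := lintegral_mono (fun ω => hpt ω.2)
      _ = (Tm η θ)⁻¹ * ∫⁻ ω in {ω : ℝ × ℝ | ω.1 < ω.2}, W ω.2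
            ∂((gaussianReal η 1).prod (gaussianReal θ 1)) := by
          rw [selLaw, ProbabilityTheory.cond, lintegral_smul_measure, prod_S_eq, smul_eq_mul]
      _ = (Tm η θ)⁻¹ * ∫⁻ y, W y * Gm η y ∂(gaussianReal θ 1) := by
          congr 1
          rw [← lintegral_indicator measurableSet_S]
          have hF : Measurable fun ω : ℝ × ℝ => W ω.2 := hWmeas.comp measurable_snd
          rw [lintegral_prod_symm' _ (hF.indicator measurableSet_S)]
          refine lintegral_congr (fun y => ?_)
          have hind : ∀ x : ℝ, ({ω : ℝ × ℝ | ω.1 < ω.2}).indicator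
              (fun ω => W ω.2) (x, y) = (Set.Iio y).indicator (fun _ => W y) x := by
            intro x
            by_cases hx : x < y
            · simp [Set.indicator_apply, Set.mem_setOf_eq, hx]
            · simp [Set.indicator_apply, Set.mem_setOf_eq, hx]
          simp_rw [hind]
          rw [lintegral_indicator measurableSet_Iio, setLIntegral_const]
          rfl
  exact ne_top_of_le_ne_top
    (ENNReal.mul_ne_top (ENNReal.inv_ne_top.mpr (Tm_ne_zero η θ)) hfin) hmain
end

section
/- Fix a > 0 and define g(x) = (Φ(√(x² + a²)) − Φ(x)) / (1 − Φ(x)) for x > 0, where Φ is the standard normal distribution function. Then g is strictly decreasing on (0, ∞) and lim_{x → ∞} g(x) = 1 − e^{−a²/2}. -/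
open MeasureTheory ProbabilityTheory

/-- The standard normal cumulative distribution function `Φ`. -/
noncomputable def stdNormalCDF (x : ℝ) : ℝ := ((gaussianReal 0 1) (Set.Iic x)).toReal

open Real Set Filter

noncomputable def phi : ℝ → ℝ := gaussianPDFReal 0 1

lemma phi_eq (x : ℝ) : phi x = (Real.sqrt (2 * π))⁻¹ * Real.exp (-x ^ 2 / 2) := by
  simp [phi, gaussianPDFReal]

lemma phi_cont : Continuous phi := by
  rw [show phi = fun x => (Real.sqrt (2 * π))⁻¹ * Real.exp (-x ^ 2 / 2) from funext phi_eq]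
  continuity

lemma phi_pos (x : ℝ) : 0 < phi x := gaussianPDFReal_pos 0 1 x one_ne_zero

lemma phi_integrable : Integrable phi := integrable_gaussianPDFReal 0 1

lemma phi_total : ∫ x, phi x = 1 := integral_gaussianPDFReal_eq_one 0 one_ne_zero

section tail
variable {h : ℝ → ℝ} (hc : Continuous h) (hi : Integrable h)
include hi

lemma tail_eq (x : ℝ) : ∫ t in Ioi x, h t = (∫ t, h t) - ∫ t in Iic x, h t := by
  rw [← intervalIntegral.integral_Iic_add_Ioi hi.integrableOn hi.integrableOn]; ring

include hc

lemma tail_hasDerivAt (x : ℝ) :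
    HasDerivAt (fun x => ∫ t in Ioi x, h t) (-h x) x := by
  have key : ∀ y : ℝ, ∫ t in Ioi y, h t
      = (∫ t, h t) - ((∫ t in (0:ℝ)..y, h t) + ∫ t in Iic (0:ℝ), h t) := by
    intro y
    rw [tail_eq hi, ← intervalIntegral.integral_Iic_sub_Iic hi.integrableOn hi.integrableOn]
    ring
  rw [show (fun x => ∫ t in Ioi x, h t)
      = fun y => (∫ t, h t) - ((∫ t in (0:ℝ)..y, h t) + ∫ t in Iic (0:ℝ), h t) from funext key]
  have h1 : HasDerivAt (fun y => ∫ t in (0:ℝ)..y, h t) (h x) x :=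
    intervalIntegral.integral_hasDerivAt_right hi.intervalIntegrable
      hc.stronglyMeasurable.stronglyMeasurableAtFilter hc.continuousAt
  simpa using ((h1.add_const _).const_sub (∫ t, h t))

omit hc in
lemma tail_tendsto : Tendsto (fun x => ∫ t in Ioi x, h t) atTop (nhds 0) := by
  have h1 : Tendsto (fun x : ℝ => ∫ t in Iic x, h t) atTop (nhds (∫ t, h t)) :=
    (MeasureTheory.aecover_Iic tendsto_id).integral_tendsto_of_countably_generated hi
  have := h1.const_sub (∫ t, h t)
  simp only [sub_self] at this
  exact this.congr fun x => (tail_eq hi x).symm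

end tail

section main
variable {a : ℝ} (ha : 0 < a)
include ha

lemma sq_add_pos (t : ℝ) : 0 < t ^ 2 + a ^ 2 := by nlinarith [sq_nonneg t]

lemma s_pos (t : ℝ) : 0 < Real.sqrt (t ^ 2 + a ^ 2) := Real.sqrt_pos.2 (sq_add_pos ha t)

lemma s_hasDerivAt (t : ℝ) :
    HasDerivAt (fun t : ℝ => Real.sqrt (t ^ 2 + a ^ 2))
      (t / Real.sqrt (t ^ 2 + a ^ 2)) t := by
  have h1 : HasDerivAt (fun t : ℝ => t ^ 2 + a ^ 2) (2 * t) t := by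
    simpa using ((hasDerivAt_pow 2 t).add_const (a ^ 2))
  have := (Real.hasDerivAt_sqrt (ne_of_gt (sq_add_pos ha t))).comp t h1
  refine this.congr_deriv ?_
  field_simp

noncomputable def rr (a t : ℝ) : ℝ := t / Real.sqrt (t ^ 2 + a ^ 2)

lemma rr_hasDerivAt (t : ℝ) :
    HasDerivAt (rr a) (a ^ 2 / (Real.sqrt (t ^ 2 + a ^ 2)) ^ 3) t := by
  have h1 := (hasDerivAt_id t).div (s_hasDerivAt ha t) (ne_of_gt (s_pos ha t))
  refine h1.congr_deriv ?_
  have hs := s_pos ha t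
  have hsq : Real.sqrt (t ^ 2 + a ^ 2) ^ 2 = t ^ 2 + a ^ 2 :=
    Real.sq_sqrt (le_of_lt (sq_add_pos ha t))
  simp only [id]
  field_simp
  linear_combination hsq

lemma rr_strictMono : StrictMono (rr a) := by
  apply strictMono_of_deriv_pos
  intro t
  rw [(rr_hasDerivAt ha t).deriv]
  positivity

lemma rr_le_one (t : ℝ) : rr a t ≤ 1 := by
  rw [show rr a t = t / Real.sqrt (t ^ 2 + a ^ 2) from rfl, div_le_one (s_pos ha t)]
  nlinarith [Real.sq_sqrt (le_of_lt (sq_add_pos ha t)), s_pos ha t, sq_nonneg (t - Real.sqrt (t^2+a^2))]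

lemma abs_rr_le_one (t : ℝ) : |rr a t| ≤ 1 := by
  rw [show rr a t = t / Real.sqrt (t ^ 2 + a ^ 2) from rfl, abs_div,
    abs_of_pos (s_pos ha t), div_le_one (s_pos ha t)]
  nlinarith [Real.sq_sqrt (le_of_lt (sq_add_pos ha t)), s_pos ha t, sq_abs t, abs_nonneg t]

lemma rr_tendsto : Tendsto (rr a) atTop (nhds 1) := by
  have key : ∀ x : ℝ, 0 < x → rr a x = (Real.sqrt (1 + (a / x) ^ 2))⁻¹ := by
    intro x hx
    have hxx : x ^ 2 + a ^ 2 = x ^ 2 * (1 + (a / x) ^ 2) := by field_simp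
    rw [show rr a x = x / Real.sqrt (x ^ 2 + a ^ 2) from rfl, hxx,
      Real.sqrt_mul (sq_nonneg x), Real.sqrt_sq hx.le, ← div_div, div_self hx.ne', one_div]
  have h0 : Tendsto (fun x : ℝ => a / x) atTop (nhds 0) :=
    tendsto_const_nhds.div_atTop tendsto_id
  have h1 : Tendsto (fun x : ℝ => 1 + (a / x) ^ 2) atTop (nhds 1) := by
    have := (tendsto_const_nhds (x := (1:ℝ))).add (h0.pow 2)
    simpa using this
  have h2 : Tendsto (fun x : ℝ => Real.sqrt (1 + (a / x) ^ 2)) atTop (nhds 1) := by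
    have := (Real.continuous_sqrt.tendsto 1).comp h1
    simpa [Function.comp_def] using this
  have h3 := h2.inv₀ (by norm_num)
  rw [inv_one] at h3
  exact h3.congr' (by filter_upwards [eventually_gt_atTop 0] with x hx using (key x hx).symm)

noncomputable def DD (x : ℝ) : ℝ := ∫ t in Ioi x, phi t
noncomputable def EE (a x : ℝ) : ℝ := ∫ t in Ioi x, phi t * rr a t

lemma rr_cont : Continuous (rr a) := by
  apply continuous_id.div
  · exact (Real.continuous_sqrt.comp (by continuity))
  · exact fun t => (s_pos ha t).ne'

lemma psi_cont : Continuous (fun t => phi t * rr a t) := phi_cont.mul (rr_cont ha)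

lemma psi_integrable : Integrable (fun t => phi t * rr a t) := by
  refine phi_integrable.mono (psi_cont ha).aestronglyMeasurable (ae_of_all _ fun t => ?_)
  rw [norm_mul, Real.norm_eq_abs, Real.norm_eq_abs, abs_of_pos (phi_pos t)]
  calc phi t * |rr a t| ≤ phi t * 1 := by
        exact mul_le_mul_of_nonneg_left (abs_rr_le_one ha t) (phi_pos t).le
    _ = phi t := mul_one _

omit ha in
lemma DD_hasDerivAt (x : ℝ) : HasDerivAt DD (-phi x) x :=
  tail_hasDerivAt phi_cont phi_integrable x

omit ha in
lemma DD_tendsto : Tendsto DD atTop (nhds 0) := tail_tendsto phi_integrable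

omit ha in
lemma DD_pos (x : ℝ) : 0 < DD x := by
  rw [DD, setIntegral_pos_iff_support_of_nonneg_ae
    (ae_of_all _ fun t => (phi_pos t).le) phi_integrable.integrableOn]
  have hsupp : Function.support phi ∩ Ioi x = Ioi x := by
    rw [inter_eq_right]
    exact fun t _ => (phi_pos t).ne'
  rw [hsupp]
  simp [Real.volume_Ioi]

lemma EE_hasDerivAt (x : ℝ) : HasDerivAt (EE a) (-(phi x * rr a x)) x :=
  tail_hasDerivAt (psi_cont ha) (psi_integrable ha) x

lemma EE_tendsto : Tendsto (EE a) atTop (nhds 0) := tail_tendsto (psi_integrable ha)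

lemma phi_comp_s (x : ℝ) :
    phi (Real.sqrt (x ^ 2 + a ^ 2)) = Real.exp (-a ^ 2 / 2) * phi x := by
  rw [phi_eq, phi_eq, Real.sq_sqrt (sq_add_pos ha x).le]
  rw [show -(x ^ 2 + a ^ 2) / 2 = -a ^ 2 / 2 + -x ^ 2 / 2 by ring, Real.exp_add]
  ring

lemma key_id (x : ℝ) :
    DD (Real.sqrt (x ^ 2 + a ^ 2)) = Real.exp (-a ^ 2 / 2) * EE a x := by
  set c := Real.exp (-a ^ 2 / 2) with hc
  set G := fun x => DD (Real.sqrt (x ^ 2 + a ^ 2)) - c * EE a x with hG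
  have hderiv : ∀ y : ℝ, HasDerivAt G 0 y := by
    intro y
    have h1 := (DD_hasDerivAt (Real.sqrt (y ^ 2 + a ^ 2))).comp y (s_hasDerivAt ha y)
    have h2 := ((EE_hasDerivAt ha y).const_mul c)
    have h3 := h1.sub h2
    refine h3.congr_deriv ?_
    symm
    rw [phi_comp_s ha, ← hc]
    show (0 : ℝ) = -(c * phi y) * (y / Real.sqrt (y ^ 2 + a ^ 2)) - c * -(phi y * rr a y)
    rw [show rr a y = y / Real.sqrt (y ^ 2 + a ^ 2) from rfl]
    ring
  have hconst : ∀ y : ℝ, G y = G x :=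
    fun y => is_const_of_deriv_eq_zero (fun z => (hderiv z).differentiableAt)
      (fun z => (hderiv z).deriv) y x
  have hs_top : Tendsto (fun x : ℝ => Real.sqrt (x ^ 2 + a ^ 2)) atTop atTop := by
    apply tendsto_atTop_mono (fun x => ?_) tendsto_id
    calc (id x : ℝ) = x := rfl
      _ ≤ |x| := le_abs_self x
      _ = Real.sqrt (x ^ 2) := (Real.sqrt_sq_eq_abs x).symm
      _ ≤ Real.sqrt (x ^ 2 + a ^ 2) := Real.sqrt_le_sqrt (by nlinarith)
  have hG0 : Tendsto G atTop (nhds 0) := by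
    have h1 := DD_tendsto.comp hs_top
    have h2 := (EE_tendsto ha).const_mul c
    have := h1.sub h2
    simpa using this
  have : Tendsto G atTop (nhds (G x)) := by
    rw [show G = fun _ => G x from funext hconst]
    exact tendsto_const_nhds
  have hx0 : G x = 0 := tendsto_nhds_unique this hG0
  exact sub_eq_zero.mp hx0

lemma E_gt (x : ℝ) : rr a x * DD x < EE a x := by
  have hint : IntegrableOn (fun t => phi t * (rr a t - rr a x)) (Ioi x) := by
    have : Integrable (fun t => phi t * rr a t - rr a x * phi t) :=
      (psi_integrable ha).sub (phi_integrable.const_mul _)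
    exact (this.congr (ae_of_all _ fun t => by ring)).integrableOn
  have hpos : 0 < ∫ t in Ioi x, phi t * (rr a t - rr a x) := by
    rw [setIntegral_pos_iff_support_of_nonneg_ae ?_ hint]
    · have hsupp : Ioi x ⊆ Function.support fun t => phi t * (rr a t - rr a x) := by
        intro t ht
        have : 0 < phi t * (rr a t - rr a x) :=
          mul_pos (phi_pos t) (sub_pos.2 (rr_strictMono ha ht))
        exact this.ne'
      have : Function.support (fun t => phi t * (rr a t - rr a x)) ∩ Ioi x = Ioi x :=
        inter_eq_right.2 hsupp
      rw [this]
      simp [Real.volume_Ioi]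
    · filter_upwards [ae_restrict_mem measurableSet_Ioi] with t ht
      exact mul_nonneg (phi_pos t).le (sub_nonneg.2 (rr_strictMono ha ht).le)
  have heq : ∫ t in Ioi x, phi t * (rr a t - rr a x) = EE a x - rr a x * DD x := by
    rw [EE, DD, ← MeasureTheory.integral_const_mul, ← MeasureTheory.integral_sub
      ((psi_integrable ha).integrableOn) ((phi_integrable.const_mul _).integrableOn)]
    congr 1
    ext t
    ring
  linarith [heq ▸ hpos]

lemma E_le (x : ℝ) : EE a x ≤ DD x := by
  refine setIntegral_mono_on ((psi_integrable ha).integrableOn)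
    phi_integrable.integrableOn measurableSet_Ioi fun t _ => ?_
  calc phi t * rr a t ≤ phi t * 1 :=
        mul_le_mul_of_nonneg_left (rr_le_one ha t) (phi_pos t).le
    _ = phi t := mul_one _

lemma q_strictMono : StrictMonoOn (fun x => EE a x / DD x) (Ioi (0 : ℝ)) := by
  have hq : ∀ x : ℝ, HasDerivAt (fun x => EE a x / DD x)
      ((-(phi x * rr a x) * DD x - EE a x * (-phi x)) / DD x ^ 2) x :=
    fun x => (EE_hasDerivAt ha x).div (DD_hasDerivAt x) (DD_pos x).ne'
  apply strictMonoOn_of_deriv_pos (convex_Ioi 0)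
  · exact fun x _ => (hq x).differentiableAt.continuousAt.continuousWithinAt
  · intro x hx
    rw [(hq x).deriv]
    have h1 : 0 < -(phi x * rr a x) * DD x - EE a x * -phi x := by
      have := E_gt ha x
      nlinarith [phi_pos x]
    exact div_pos h1 (pow_pos (DD_pos x) 2)

lemma q_tendsto : Tendsto (fun x => EE a x / DD x) atTop (nhds 1) := by
  refine tendsto_of_tendsto_of_tendsto_of_le_of_le (rr_tendsto ha) tendsto_const_nhds
    (fun x => ?_) (fun x => ?_)
  · rw [le_div_iff₀ (DD_pos x)]
    exact (E_gt ha x).le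
  · rw [div_le_one (DD_pos x)]
    exact E_le ha x

end main

lemma cdf_eq (x : ℝ) : stdNormalCDF x = ∫ t in Iic x, phi t := by
  rw [stdNormalCDF, gaussianReal_apply_eq_integral 0 one_ne_zero,
    ENNReal.toReal_ofReal (integral_nonneg fun t => gaussianPDFReal_nonneg 0 1 t)]
  rfl

lemma one_sub_cdf (x : ℝ) : 1 - stdNormalCDF x = DD x := by
  rw [cdf_eq, DD, tail_eq phi_integrable, phi_total]

/-- Lemma 2: `g(x) = (Φ(√(x² + a²)) − Φ(x)) / (1 − Φ(x))` is strictly decreasing on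
`(0,∞)` and tends to `1 − e^{−a²/2}` as `x → ∞`. -/
theorem g_strictAnti_and_tendsto (a : ℝ) (ha : 0 < a) :
    StrictAntiOn
        (fun x : ℝ =>
          (stdNormalCDF (Real.sqrt (x ^ 2 + a ^ 2)) - stdNormalCDF x) / (1 - stdNormalCDF x))
        (Set.Ioi 0)
      ∧ Filter.Tendsto
        (fun x : ℝ =>
          (stdNormalCDF (Real.sqrt (x ^ 2 + a ^ 2)) - stdNormalCDF x) / (1 - stdNormalCDF x))
        Filter.atTop (nhds (1 - Real.exp (-a ^ 2 / 2))) := by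
  set c := Real.exp (-a ^ 2 / 2) with hc
  have hcpos : 0 < c := Real.exp_pos _
  have g_eq : ∀ x : ℝ,
      (stdNormalCDF (Real.sqrt (x ^ 2 + a ^ 2)) - stdNormalCDF x) / (1 - stdNormalCDF x)
        = 1 - c * (EE a x / DD x) := by
    intro x
    have h1 := one_sub_cdf x
    have h2 := one_sub_cdf (Real.sqrt (x ^ 2 + a ^ 2))
    have h3 := key_id ha x
    have hnum : stdNormalCDF (Real.sqrt (x ^ 2 + a ^ 2)) - stdNormalCDF x
        = DD x - c * EE a x := by linarith
    rw [hnum, h1, sub_div, div_self (DD_pos x).ne', mul_div_assoc]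
  constructor
  · intro x hx y hy hxy
    simp only [g_eq]
    exact sub_lt_sub_left (mul_lt_mul_of_pos_left (q_strictMono ha hx hy hxy) hcpos) 1
  · have h := ((q_tendsto ha).const_mul c).const_sub 1
    simp only [mul_one] at h
    exact h.congr fun x => (g_eq x).symm
end

section
/- Let Q_{η,0} be the product measure N(η,1) × N(0,1) on ℝ², 𝕌 = {(x,y) : x ≤ y}, c(η) = Q_{η,0}(𝕌), P_{η,0}(A) = Q_{η,0}(A ∩ 𝕌)/c(η), and for Δ > 0 let B_{η,Δ} = {(x,y) ∈ 𝕌 : (x − η)² + y² ≤ η²/2 + Δ²}. Then for every η ≥ 0 and Δ > 0, P_{η,0}(B_{η,Δ}) = 2 ∫₀^Δ φ(v) · [Φ(√(η²/2 + Δ² − v²)) − Φ(η/√2)] / (1 − Φ(η/√2)) dv, where φ and Φ are the standard normal density and distribution function. -/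
open MeasureTheory ProbabilityTheory

/-- The half-plane `𝕌 = {(x,y) : x ≤ y}`. -/
def halfPlaneU : Set (ℝ × ℝ) := {ω : ℝ × ℝ | ω.1 ≤ ω.2}

/-- `Q_{η,θ}`, the product measure `N(η,1) × N(θ,1)` on `ℝ × ℝ`. -/
noncomputable def Qmeas (η θ : ℝ) : Measure (ℝ × ℝ) :=
  (gaussianReal η 1).prod (gaussianReal θ 1)

/-- `P_{η,θ}`, the product measure `N(η,1) × N(θ,1)` conditioned on `𝕌`. -/
noncomputable def Pmeas (η θ : ℝ) : Measure (ℝ × ℝ) := (Qmeas η θ)[|halfPlaneU]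

/-- The circle section `B_{η,Δ} = {(x,y) ∈ 𝕌 : (x − η)² + y² ≤ η²/2 + Δ²}`. -/
def Bset (η Δ : ℝ) : Set (ℝ × ℝ) :=
  {ω : ℝ × ℝ | ω ∈ halfPlaneU ∧ (ω.1 - η) ^ 2 + ω.2 ^ 2 ≤ η ^ 2 / 2 + Δ ^ 2}

/-! ### Auxiliary material -/

section Aux

open Real Set

lemma sqrt_two_pos : (0:ℝ) < Real.sqrt 2 := Real.sqrt_pos.2 (by norm_num)

lemma sqrt_two_sq : Real.sqrt 2 * Real.sqrt 2 = 2 := Real.mul_self_sqrt (by norm_num)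

/-- basic facts on `stdNormalCDF` -/
lemma gauss_Iic (x : ℝ) :
    gaussianReal 0 1 (Set.Iic x) = ENNReal.ofReal (stdNormalCDF x) := by
  rw [stdNormalCDF, ENNReal.ofReal_toReal (measure_ne_top _ _)]

lemma stdNormalCDF_nonneg (x : ℝ) : 0 ≤ stdNormalCDF x := ENNReal.toReal_nonneg

lemma stdNormalCDF_mono : Monotone stdNormalCDF := fun a b hab =>
  ENNReal.toReal_mono (measure_ne_top _ _) (measure_mono (Set.Iic_subset_Iic.2 hab))

lemma stdNormalCDF_le_one (x : ℝ) : stdNormalCDF x ≤ 1 := by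
  rw [stdNormalCDF]
  calc ((gaussianReal 0 1) (Set.Iic x)).toReal ≤ ((gaussianReal 0 1) Set.univ).toReal :=
        ENNReal.toReal_mono (measure_ne_top _ _) (measure_mono (Set.subset_univ _))
    _ = 1 := by simp

lemma gaussianReal_Ioi_ne_zero (x : ℝ) : gaussianReal 0 1 (Set.Ioi x) ≠ 0 := by
  rw [gaussianReal_apply 0 one_ne_zero]
  intro h
  have hmeas : Measurable (gaussianPDF 0 1) := measurable_gaussianPDF 0 1
  have hpos : 0 < ∫⁻ y in Set.Ioi x, gaussianPDF 0 1 y := by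
    rw [lintegral_pos_iff_support hmeas]
    have hsupp : Function.support (gaussianPDF 0 1) = Set.univ := by
      ext y
      simp [Function.mem_support, (gaussianPDF_pos 0 one_ne_zero y).ne']
    rw [hsupp]
    simp [Real.volume_Ioi]
  exact hpos.ne' h

lemma stdNormalCDF_lt_one (x : ℝ) : stdNormalCDF x < 1 := by
  have hsum : gaussianReal 0 1 (Set.Iic x) + gaussianReal 0 1 (Set.Ioi x) = 1 := by
    rw [← measure_union (Set.Iic_disjoint_Ioi le_rfl) measurableSet_Ioi, Set.Iic_union_Ioi,
      measure_univ]
  have hlt : gaussianReal 0 1 (Set.Iic x) < 1 := by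
    rw [← hsum]
    exact ENNReal.lt_add_right (measure_ne_top _ _) (gaussianReal_Ioi_ne_zero x)
  rw [stdNormalCDF]
  have := ENNReal.toReal_lt_toReal (measure_ne_top (gaussianReal 0 1) (Set.Iic x))
    (ENNReal.one_ne_top)
  simpa using (this.2 hlt)

lemma gauss_Iio (x : ℝ) : gaussianReal 0 1 (Set.Iio x) = gaussianReal 0 1 (Set.Iic x) := by
  have hsing : gaussianReal 0 1 {x} = 0 :=
    (gaussianReal_absolutelyContinuous 0 one_ne_zero) (measure_singleton x)
  have h : Set.Iic x = Set.Iio x ∪ {x} := by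
    ext y; simp [le_iff_lt_or_eq]
  rw [h, measure_union (by simp) (measurableSet_singleton x), hsing, add_zero]

lemma gauss_Icc {l u : ℝ} (h : l ≤ u) :
    gaussianReal 0 1 (Set.Icc l u) = ENNReal.ofReal (stdNormalCDF u - stdNormalCDF l) := by
  rw [← (show Set.Iic u \ Set.Iio l = Set.Icc l u by
      ext x; simp only [Set.mem_diff, Set.mem_Iic, Set.mem_Iio, Set.mem_Icc, not_lt]; tauto),
    measure_diff (Set.Iio_subset_Iic_self.trans (Set.Iic_subset_Iic.2 h))
    measurableSet_Iio.nullMeasurableSet (measure_ne_top _ _), gauss_Iio, gauss_Iic, gauss_Iic,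
    ENNReal.ofReal_sub _ (stdNormalCDF_nonneg l)]

lemma gauss_Ici (x : ℝ) :
    gaussianReal 0 1 (Set.Ici x) = ENNReal.ofReal (1 - stdNormalCDF x) := by
  have : Set.Ici x = (Set.Iio x)ᶜ := by ext y; simp
  rw [this, measure_compl measurableSet_Iio (measure_ne_top _ _), measure_univ, gauss_Iio,
    gauss_Iic, ← ENNReal.ofReal_one, ENNReal.ofReal_sub _ (stdNormalCDF_nonneg x)]

lemma measurable_stdNormalCDF : Measurable stdNormalCDF := stdNormalCDF_mono.measurable

/-- Product of two Gaussian measures as a density against 2D Lebesgue measure. -/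
lemma Qmeas_eq_withDensity (μ₁ μ₂ : ℝ) :
    Qmeas μ₁ μ₂ = (volume : Measure (ℝ × ℝ)).withDensity
      (fun p => gaussianPDF μ₁ 1 p.1 * gaussianPDF μ₂ 1 p.2) := by
  refine Measure.prod_eq fun s t hs ht => ?_
  rw [withDensity_apply _ (hs.prod ht), Measure.volume_eq_prod ℝ ℝ, ← Measure.prod_restrict,
    lintegral_prod_mul ((measurable_gaussianPDF μ₁ 1).aemeasurable)
      ((measurable_gaussianPDF μ₂ 1).aemeasurable),
    ← withDensity_apply _ hs, ← withDensity_apply _ ht,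
    ← gaussianReal_of_var_ne_zero μ₁ one_ne_zero, ← gaussianReal_of_var_ne_zero μ₂ one_ne_zero]

/-- Mapping a density measure through a measurable equivalence. -/
lemma map_withDensity_equiv {α : Type*} [MeasurableSpace α] (e : α ≃ᵐ α) (μ : Measure α)
    {F : α → ENNReal} (hF : Measurable F) :
    (μ.withDensity F).map e = (μ.map e).withDensity (F ∘ e.symm) := by
  ext s hs
  rw [Measure.map_apply e.measurable hs, withDensity_apply _ (e.measurable hs),
    withDensity_apply _ hs, setLIntegral_map hs (hF.comp e.symm.measurable) e.measurable]
  refine setLIntegral_congr_fun (e.measurable hs) (fun x _ => ?_)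
  simp

/-- The rotation-translation `T(a,b) = ((a-b)/√2 + η, (a+b)/√2)` as a measurable equivalence. -/
noncomputable def Tmap (η : ℝ) : (ℝ × ℝ) ≃ᵐ (ℝ × ℝ) where
  toFun p := ((p.1 - p.2) / Real.sqrt 2 + η, (p.1 + p.2) / Real.sqrt 2)
  invFun q := ((q.1 - η + q.2) / Real.sqrt 2, (q.2 - (q.1 - η)) / Real.sqrt 2)
  left_inv p := by
    have h2 := sqrt_two_sq
    have hne := sqrt_two_pos.ne'
    ext
    · show ((p.1 - p.2) / Real.sqrt 2 + η - η + (p.1 + p.2) / Real.sqrt 2) / Real.sqrt 2 = p.1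
      field_simp
      ring_nf; rw [Real.sq_sqrt (by norm_num : (0:ℝ) ≤ 2)] <;> ring
    · show ((p.1 + p.2) / Real.sqrt 2 - ((p.1 - p.2) / Real.sqrt 2 + η - η)) / Real.sqrt 2 = p.2
      field_simp
      ring_nf; rw [Real.sq_sqrt (by norm_num : (0:ℝ) ≤ 2)] <;> ring
  right_inv q := by
    have h2 := sqrt_two_sq
    have hne := sqrt_two_pos.ne'
    ext
    · show ((q.1 - η + q.2) / Real.sqrt 2 - (q.2 - (q.1 - η)) / Real.sqrt 2) / Real.sqrt 2 + η = q.1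
      field_simp
      ring_nf; rw [Real.sq_sqrt (by norm_num : (0:ℝ) ≤ 2)] <;> ring
    · show ((q.1 - η + q.2) / Real.sqrt 2 + (q.2 - (q.1 - η)) / Real.sqrt 2) / Real.sqrt 2 = q.2
      field_simp
      ring_nf; rw [Real.sq_sqrt (by norm_num : (0:ℝ) ≤ 2)] <;> ring
  measurable_toFun := by
    apply Measurable.prod <;> dsimp <;> fun_prop
  measurable_invFun := by
    apply Measurable.prod <;> dsimp <;> fun_prop

/-- The rotation part as a linear map. -/
noncomputable def rotL : (ℝ × ℝ) →ₗ[ℝ] (ℝ × ℝ) where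
  toFun p := ((p.1 - p.2) / Real.sqrt 2, (p.1 + p.2) / Real.sqrt 2)
  map_add' p q := by ext <;> dsimp <;> ring
  map_smul' c p := by ext <;> dsimp <;> ring

lemma rotL_det : LinearMap.det rotL = 1 := by
  have hb := Module.Basis.finTwoProd ℝ
  rw [← LinearMap.det_toMatrix (Module.Basis.finTwoProd ℝ) rotL]
  have h0 : (LinearMap.toMatrix (Module.Basis.finTwoProd ℝ) (Module.Basis.finTwoProd ℝ)) rotL
      = !![1 / Real.sqrt 2, -(1 / Real.sqrt 2); 1 / Real.sqrt 2, 1 / Real.sqrt 2] := by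
    ext i j
    fin_cases i <;> fin_cases j <;>
      simp [LinearMap.toMatrix_apply, rotL, Module.Basis.finTwoProd_zero, Module.Basis.finTwoProd_one] <;>
      ring_nf
  rw [h0, Matrix.det_fin_two_of]
  have h2 : Real.sqrt 2 ^ 2 = 2 := Real.sq_sqrt (by norm_num)
  field_simp
  try rw [h2]
  try ring

lemma map_rotL_volume : Measure.map rotL (volume : Measure (ℝ × ℝ)) = volume := by
  rw [Measure.map_linearMap_addHaar_eq_smul_addHaar volume (by rw [rotL_det]; norm_num),
    rotL_det]
  norm_num

lemma map_Tmap_volume (η : ℝ) :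
    Measure.map (Tmap η) (volume : Measure (ℝ × ℝ)) = volume := by
  have hcoe : (⇑(Tmap η) : ℝ × ℝ → ℝ × ℝ) = (fun q => ((η, 0) : ℝ × ℝ) + q) ∘ rotL := by
    funext p
    show ((p.1 - p.2) / Real.sqrt 2 + η, (p.1 + p.2) / Real.sqrt 2)
      = ((η, 0) : ℝ × ℝ) + ((p.1 - p.2) / Real.sqrt 2, (p.1 + p.2) / Real.sqrt 2)
    ext <;> simp [add_comm]
  rw [hcoe, ← Measure.map_map (measurable_const_add _) rotL.continuous_of_finiteDimensional.measurable,
    map_rotL_volume, map_add_left_eq_self]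

lemma Tmap_symm_apply (η : ℝ) (q : ℝ × ℝ) :
    (Tmap η).symm q = ((q.1 - η + q.2) / Real.sqrt 2, (q.2 - (q.1 - η)) / Real.sqrt 2) := rfl

/-- The pushforward of the standard 2D Gaussian under `Tmap η` is `Qmeas η 0`. -/
lemma map_Tmap_gauss (η : ℝ) :
    Measure.map (Tmap η) (Qmeas 0 0) = Qmeas η 0 := by
  have hF : Measurable (fun p : ℝ × ℝ => gaussianPDF 0 1 p.1 * gaussianPDF 0 1 p.2) :=
    ((measurable_gaussianPDF 0 1).comp measurable_fst).mul
      ((measurable_gaussianPDF 0 1).comp measurable_snd)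
  rw [Qmeas_eq_withDensity 0 0, map_withDensity_equiv _ _ hF,
    map_Tmap_volume, Qmeas_eq_withDensity η 0]
  congr 1
  funext q
  simp only [Function.comp_apply, Tmap_symm_apply]
  rw [gaussianPDF, gaussianPDF, gaussianPDF, gaussianPDF,
    ← ENNReal.ofReal_mul (gaussianPDFReal_nonneg _ _ _),
    ← ENNReal.ofReal_mul (gaussianPDFReal_nonneg _ _ _)]
  congr 1
  simp only [gaussianPDFReal, NNReal.coe_one, mul_one]
  have h2 : ((q.1 - η + q.2) / Real.sqrt 2 - 0) ^ 2 + ((q.2 - (q.1 - η)) / Real.sqrt 2 - 0) ^ 2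
      = (q.1 - η) ^ 2 + (q.2 - 0) ^ 2 := by
    have hne := sqrt_two_pos.ne'
    field_simp
    ring_nf; rw [Real.sq_sqrt (by norm_num : (0:ℝ) ≤ 2)] <;> ring
  have harg : -((q.1 - η + q.2) / Real.sqrt 2 - 0) ^ 2 / 2
        + -((q.2 - (q.1 - η)) / Real.sqrt 2 - 0) ^ 2 / 2
      = -(q.1 - η) ^ 2 / 2 + -(q.2 - 0) ^ 2 / 2 := by linarith [h2]
  rw [mul_mul_mul_comm, ← Real.exp_add, harg, Real.exp_add, ← mul_mul_mul_comm]


lemma measurableSet_halfPlaneU : MeasurableSet halfPlaneU :=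
  measurableSet_le measurable_fst measurable_snd

lemma measurableSet_Bset (η Δ : ℝ) : MeasurableSet (Bset η Δ) := by
  have : Bset η Δ = halfPlaneU ∩ {ω : ℝ × ℝ | (ω.1 - η) ^ 2 + ω.2 ^ 2 ≤ η ^ 2 / 2 + Δ ^ 2} := rfl
  rw [this]
  exact measurableSet_halfPlaneU.inter
    (measurableSet_le (((measurable_fst.sub measurable_const).pow_const 2).add
      (measurable_snd.pow_const 2)) measurable_const)

lemma Tmap_mem_U_iff (η : ℝ) (p : ℝ × ℝ) :
    Tmap η p ∈ halfPlaneU ↔ η / Real.sqrt 2 ≤ p.2 := by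
  have hne := sqrt_two_pos.ne'
  show (p.1 - p.2) / Real.sqrt 2 + η ≤ (p.1 + p.2) / Real.sqrt 2 ↔ η / Real.sqrt 2 ≤ p.2
  have key : (p.1 + p.2) / Real.sqrt 2 - (p.1 - p.2) / Real.sqrt 2 = p.2 * Real.sqrt 2 := by
    field_simp
    linear_combination (-p.2) * sqrt_two_sq
  constructor
  · intro h
    rw [div_le_iff₀ sqrt_two_pos]
    linarith
  · intro h
    rw [div_le_iff₀ sqrt_two_pos] at h
    linarith

lemma preimage_Tmap_U (η : ℝ) :
    ⇑(Tmap η) ⁻¹' halfPlaneU = {p : ℝ × ℝ | η / Real.sqrt 2 ≤ p.2} := by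
  ext p
  exact Tmap_mem_U_iff η p

lemma preimage_Tmap_B (η Δ : ℝ) :
    ⇑(Tmap η) ⁻¹' (Bset η Δ)
      = {p : ℝ × ℝ | η / Real.sqrt 2 ≤ p.2 ∧ p.1 ^ 2 + p.2 ^ 2 ≤ η ^ 2 / 2 + Δ ^ 2} := by
  ext p
  have hne := sqrt_two_pos.ne'
  have hquad : ((p.1 - p.2) / Real.sqrt 2 + η - η) ^ 2 + ((p.1 + p.2) / Real.sqrt 2) ^ 2
      = p.1 ^ 2 + p.2 ^ 2 := by
    field_simp
    ring_nf; rw [Real.sq_sqrt (by norm_num : (0:ℝ) ≤ 2)] <;> ring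
  show (Tmap η p ∈ halfPlaneU ∧ _) ↔ _
  rw [Tmap_mem_U_iff η p]
  constructor
  · rintro ⟨h1, h2⟩
    refine ⟨h1, ?_⟩
    rw [show ((Tmap η p).1 - η) ^ 2 + (Tmap η p).2 ^ 2
        = ((p.1 - p.2) / Real.sqrt 2 + η - η) ^ 2 + ((p.1 + p.2) / Real.sqrt 2) ^ 2 from rfl,
      hquad] at h2
    exact h2
  · rintro ⟨h1, h2⟩
    refine ⟨h1, ?_⟩
    show ((p.1 - p.2) / Real.sqrt 2 + η - η) ^ 2 + ((p.1 + p.2) / Real.sqrt 2) ^ 2 ≤ _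
    rw [hquad]
    exact h2

section Main

variable {η Δ : ℝ}

lemma sqrt_eta_half (hη : 0 ≤ η) : Real.sqrt (η ^ 2 / 2) = η / Real.sqrt 2 := by
  rw [Real.sqrt_div (sq_nonneg η), Real.sqrt_sq hη]

lemma cdf_arg_le (hη : 0 ≤ η) {t : ℝ} (ht : t ^ 2 ≤ Δ ^ 2) :
    η / Real.sqrt 2 ≤ Real.sqrt (η ^ 2 / 2 + Δ ^ 2 - t ^ 2) := by
  rw [← sqrt_eta_half hη]
  exact Real.sqrt_le_sqrt (by linarith)

lemma slice_eq (hη : 0 ≤ η) (hΔ : 0 < Δ) (a : ℝ) :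
    {b : ℝ | η / Real.sqrt 2 ≤ b ∧ a ^ 2 + b ^ 2 ≤ η ^ 2 / 2 + Δ ^ 2}
      = if a ∈ Set.Icc (-Δ) Δ then
          Set.Icc (η / Real.sqrt 2) (Real.sqrt (η ^ 2 / 2 + Δ ^ 2 - a ^ 2))
        else (∅ : Set ℝ) := by
  have hc0 : 0 ≤ η / Real.sqrt 2 := by positivity
  split_ifs with ha
  · have ha2 : a ^ 2 ≤ Δ ^ 2 := sq_le_sq' ha.1 ha.2
    have h0 : (0:ℝ) ≤ η ^ 2 / 2 + Δ ^ 2 - a ^ 2 := by nlinarith [sq_nonneg η]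
    ext b
    simp only [Set.mem_setOf_eq, Set.mem_Icc]
    constructor
    · rintro ⟨h1, h2⟩
      have hb0 : 0 ≤ b := le_trans hc0 h1
      exact ⟨h1, (Real.le_sqrt hb0 h0).2 (by linarith)⟩
    · rintro ⟨h1, h2⟩
      have hb0 : 0 ≤ b := le_trans hc0 h1
      have := (Real.le_sqrt hb0 h0).1 h2
      exact ⟨h1, by linarith⟩
  · ext b
    simp only [Set.mem_setOf_eq, Set.mem_empty_iff_false, iff_false, not_and, not_le]
    intro h1
    have hb2 : (η / Real.sqrt 2) ^ 2 ≤ b ^ 2 := pow_le_pow_left₀ hc0 h1 2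
    have hc2 : (η / Real.sqrt 2) ^ 2 = η ^ 2 / 2 := by
      rw [div_pow, Real.sq_sqrt (by norm_num : (0:ℝ) ≤ 2)]
    have haΔ : Δ ^ 2 < a ^ 2 := by
      rcases lt_or_ge a (-Δ) with h | h
      · nlinarith
      · have h2 : Δ < a := by
          by_contra hcon
          exact ha ⟨h, not_lt.1 hcon⟩
        nlinarith
    nlinarith

lemma measurable_sqrt_arg : Measurable fun a : ℝ => Real.sqrt (η ^ 2 / 2 + Δ ^ 2 - a ^ 2) :=
  (Real.continuous_sqrt.comp (continuous_const.sub (continuous_pow 2))).measurable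

lemma QB_eq (hη : 0 ≤ η) (hΔ : 0 < Δ) :
    Qmeas η 0 (Bset η Δ)
      = ENNReal.ofReal (2 * ∫ t in (0:ℝ)..Δ, gaussianPDFReal 0 1 t *
          (stdNormalCDF (Real.sqrt (η ^ 2 / 2 + Δ ^ 2 - t ^ 2))
            - stdNormalCDF (η / Real.sqrt 2))) := by
  set f : ℝ → ℝ := fun t => gaussianPDFReal 0 1 t *
    (stdNormalCDF (Real.sqrt (η ^ 2 / 2 + Δ ^ 2 - t ^ 2))
      - stdNormalCDF (η / Real.sqrt 2)) with hf
  have hfmeas : Measurable f :=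
    (measurable_gaussianPDFReal 0 1).mul
      ((measurable_stdNormalCDF.comp measurable_sqrt_arg).sub measurable_const)
  set G : ℝ → ℝ := (Set.Icc (-Δ) Δ).indicator f with hG
  have hGmeas : Measurable G := hfmeas.indicator measurableSet_Icc
  have hGnonneg : ∀ x, 0 ≤ G x := by
    intro x
    apply Set.indicator_nonneg
    intro a ha
    exact mul_nonneg (gaussianPDFReal_nonneg 0 1 a)
      (sub_nonneg.2 (stdNormalCDF_mono (cdf_arg_le hη (sq_le_sq' ha.1 ha.2))))
  have hSmeas : MeasurableSet
      {p : ℝ × ℝ | η / Real.sqrt 2 ≤ p.2 ∧ p.1 ^ 2 + p.2 ^ 2 ≤ η ^ 2 / 2 + Δ ^ 2} := by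
    rw [Set.setOf_and]
    exact (measurableSet_le measurable_const measurable_snd).inter
      (measurableSet_le ((measurable_fst.pow_const 2).add (measurable_snd.pow_const 2))
        measurable_const)
  -- step 1: transport to the standard Gaussian
  rw [← map_Tmap_gauss η, Measure.map_apply (Tmap η).measurable (measurableSet_Bset η Δ),
    preimage_Tmap_B η Δ]
  -- step 2: Fubini
  rw [show Qmeas 0 0 = (gaussianReal 0 1).prod (gaussianReal 0 1) from rfl,
    Measure.prod_apply hSmeas]
  -- step 3: identify slices
  have hslice : ∀ a : ℝ,
      gaussianReal 0 1 (Prod.mk a ⁻¹'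
        {p : ℝ × ℝ | η / Real.sqrt 2 ≤ p.2 ∧ p.1 ^ 2 + p.2 ^ 2 ≤ η ^ 2 / 2 + Δ ^ 2})
      = (Set.Icc (-Δ) Δ).indicator (fun a => ENNReal.ofReal
          (stdNormalCDF (Real.sqrt (η ^ 2 / 2 + Δ ^ 2 - a ^ 2))
            - stdNormalCDF (η / Real.sqrt 2))) a := by
    intro a
    have hpre : Prod.mk a ⁻¹'
        {p : ℝ × ℝ | η / Real.sqrt 2 ≤ p.2 ∧ p.1 ^ 2 + p.2 ^ 2 ≤ η ^ 2 / 2 + Δ ^ 2}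
        = {b : ℝ | η / Real.sqrt 2 ≤ b ∧ a ^ 2 + b ^ 2 ≤ η ^ 2 / 2 + Δ ^ 2} := rfl
    rw [hpre, slice_eq hη hΔ a]
    by_cases ha : a ∈ Set.Icc (-Δ) Δ
    · rw [if_pos ha, Set.indicator_of_mem ha,
        gauss_Icc (cdf_arg_le hη (sq_le_sq' ha.1 ha.2))]
    · rw [if_neg ha, Set.indicator_of_notMem ha, measure_empty]
  simp_rw [hslice]
  -- step 4: write the Gaussian integral against Lebesgue
  have hind_meas : Measurable fun a : ℝ => (Set.Icc (-Δ) Δ).indicator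
      (fun a => ENNReal.ofReal
          (stdNormalCDF (Real.sqrt (η ^ 2 / 2 + Δ ^ 2 - a ^ 2))
            - stdNormalCDF (η / Real.sqrt 2))) a :=
    (ENNReal.measurable_ofReal.comp
      ((measurable_stdNormalCDF.comp measurable_sqrt_arg).sub
        measurable_const)).indicator measurableSet_Icc
  rw [gaussianReal_of_var_ne_zero 0 one_ne_zero,
    lintegral_withDensity_eq_lintegral_mul volume (measurable_gaussianPDF 0 1) hind_meas]
  -- step 5: pointwise to an `ofReal` of a real function
  have hpt : ∀ a : ℝ, (gaussianPDF 0 1 * fun a => (Set.Icc (-Δ) Δ).indicator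
      (fun a => ENNReal.ofReal
          (stdNormalCDF (Real.sqrt (η ^ 2 / 2 + Δ ^ 2 - a ^ 2))
            - stdNormalCDF (η / Real.sqrt 2))) a) a = ENNReal.ofReal (G a) := by
    intro a
    by_cases ha : a ∈ Set.Icc (-Δ) Δ
    · simp only [Pi.mul_apply, Set.indicator_of_mem ha, hG, hf, gaussianPDF]
      rw [← ENNReal.ofReal_mul (gaussianPDFReal_nonneg 0 1 a)]
    · simp only [Pi.mul_apply, Set.indicator_of_notMem ha, hG, mul_zero, ENNReal.ofReal_zero]
  simp_rw [hpt]
  -- step 6: to a Bochner integral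
  have hGint : Integrable G volume := by
    refine (integrable_gaussianPDFReal 0 1).mono hGmeas.aestronglyMeasurable
      (Filter.Eventually.of_forall fun a => ?_)
    rw [Real.norm_eq_abs, Real.norm_eq_abs, abs_of_nonneg (hGnonneg a),
      abs_of_nonneg (gaussianPDFReal_nonneg 0 1 a)]
    by_cases ha : a ∈ Set.Icc (-Δ) Δ
    · rw [hG, Set.indicator_of_mem ha, hf]
      calc gaussianPDFReal 0 1 a * _ ≤ gaussianPDFReal 0 1 a * 1 := by
            apply mul_le_mul_of_nonneg_left _ (gaussianPDFReal_nonneg 0 1 a)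
            have h1 := stdNormalCDF_le_one (Real.sqrt (η ^ 2 / 2 + Δ ^ 2 - a ^ 2))
            have h2 := stdNormalCDF_nonneg (η / Real.sqrt 2)
            linarith
        _ = gaussianPDFReal 0 1 a := mul_one _
    · rw [hG, Set.indicator_of_notMem ha]
      exact gaussianPDFReal_nonneg 0 1 a
  rw [← ofReal_integral_eq_lintegral_ofReal hGint
    (Filter.Eventually.of_forall hGnonneg)]
  -- step 7: the integral over ℝ equals twice the interval integral
  congr 1
  have hfeven : ∀ x : ℝ, f |x| = f x := by
    intro x
    have h1 : |x| ^ 2 = x ^ 2 := sq_abs x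
    rw [hf]
    simp only [gaussianPDFReal, h1, sub_zero]
  have hGH : G = fun x => (Set.Iic Δ).indicator f |x| := by
    funext x
    by_cases ha : x ∈ Set.Icc (-Δ) Δ
    · have hx : |x| ∈ Set.Iic Δ := abs_le.2 (Set.mem_Icc.1 ha)
      rw [hG, Set.indicator_of_mem ha, Set.indicator_of_mem hx, hfeven]
    · have hx : |x| ∉ Set.Iic Δ := by
        simp only [Set.mem_Iic, not_le]
        rcases lt_or_ge x (-Δ) with h | h
        · calc Δ < -x := by linarith
            _ ≤ |x| := neg_le_abs x
        · have h2 : Δ < x := by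
            by_contra hcon
            exact ha ⟨h, not_lt.1 hcon⟩
          exact lt_of_lt_of_le h2 (le_abs_self x)
      rw [hG, Set.indicator_of_notMem ha, Set.indicator_of_notMem hx]
  rw [hGH, integral_comp_abs (f := (Set.Iic Δ).indicator f),
    setIntegral_indicator measurableSet_Iic, Set.Ioi_inter_Iic,
    ← intervalIntegral.integral_of_le hΔ.le]

lemma QU_eq (hη : 0 ≤ η) :
    Qmeas η 0 halfPlaneU = ENNReal.ofReal (1 - stdNormalCDF (η / Real.sqrt 2)) := by
  rw [← map_Tmap_gauss η, Measure.map_apply (Tmap η).measurable measurableSet_halfPlaneU,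
    preimage_Tmap_U]
  have : {p : ℝ × ℝ | η / Real.sqrt 2 ≤ p.2} = Set.univ ×ˢ Set.Ici (η / Real.sqrt 2) := by
    ext p
    simp [Set.mem_prod]
  rw [this, show Qmeas 0 0 = (gaussianReal 0 1).prod (gaussianReal 0 1) from rfl,
    Measure.prod_prod, measure_univ, one_mul, gauss_Ici]

end Main

end Aux

/-- Integral formula for `P_{η,0}(B_{η,Δ})` (Equation 13). -/
theorem prob_Bset_integral_formula (η Δ : ℝ) (hη : 0 ≤ η) (hΔ : 0 < Δ) :
    Pmeas η 0 (Bset η Δ)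
      = ENNReal.ofReal (2 * ∫ v in (0:ℝ)..Δ,
          (Real.exp (-v ^ 2 / 2) / Real.sqrt (2 * Real.pi)) *
            ((stdNormalCDF (Real.sqrt (η ^ 2 / 2 + Δ ^ 2 - v ^ 2))
                - stdNormalCDF (η / Real.sqrt 2))
              / (1 - stdNormalCDF (η / Real.sqrt 2)))) := by
  have hc : 0 < 1 - stdNormalCDF (η / Real.sqrt 2) := sub_pos.2 (stdNormalCDF_lt_one _)
  set J : ℝ := ∫ t in (0:ℝ)..Δ, gaussianPDFReal 0 1 t *
      (stdNormalCDF (Real.sqrt (η ^ 2 / 2 + Δ ^ 2 - t ^ 2))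
        - stdNormalCDF (η / Real.sqrt 2)) with hJdef
  have hJ : 0 ≤ J := by
    apply intervalIntegral.integral_nonneg hΔ.le
    intro u hu
    have hu2 : u ^ 2 ≤ Δ ^ 2 := pow_le_pow_left₀ hu.1 hu.2 2
    exact mul_nonneg (gaussianPDFReal_nonneg 0 1 u)
      (sub_nonneg.2 (stdNormalCDF_mono (cdf_arg_le hη hu2)))
  have hpdf : ∀ v : ℝ, Real.exp (-v ^ 2 / 2) / Real.sqrt (2 * Real.pi)
      = gaussianPDFReal 0 1 v := by
    intro v
    rw [gaussianPDFReal]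
    push_cast
    rw [mul_one, sub_zero, mul_one, div_eq_mul_inv, mul_comm]
  have hint : (∫ v in (0:ℝ)..Δ,
        (Real.exp (-v ^ 2 / 2) / Real.sqrt (2 * Real.pi)) *
          ((stdNormalCDF (Real.sqrt (η ^ 2 / 2 + Δ ^ 2 - v ^ 2))
              - stdNormalCDF (η / Real.sqrt 2))
            / (1 - stdNormalCDF (η / Real.sqrt 2))))
      = J * (1 - stdNormalCDF (η / Real.sqrt 2))⁻¹ := by
    rw [hJdef, ← intervalIntegral.integral_mul_const]
    apply intervalIntegral.integral_congr
    intro v _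
    dsimp only
    rw [hpdf v, div_eq_mul_inv, ← mul_assoc]
  have hBU : Bset η Δ ⊆ halfPlaneU := fun ω hω => hω.1
  show (Qmeas η 0)[|halfPlaneU] (Bset η Δ) = _
  rw [cond_apply measurableSet_halfPlaneU, Set.inter_eq_self_of_subset_right hBU,
    QU_eq hη, QB_eq hη hΔ, hint, ← mul_assoc,
    ENNReal.ofReal_mul (by linarith : (0:ℝ) ≤ 2 * J),
    ENNReal.ofReal_inv_of_pos hc, mul_comm]
end

section
/- Let P_{η,0} be the product measure N(η,1) × N(0,1) on ℝ² conditioned on 𝕌 = {(x,y) : x ≤ y}, and for Δ > 0 let B_{η,Δ} = {(x,y) ∈ 𝕌 : (x − η)² + y² ≤ η²/2 + Δ²}. Then for every fixed Δ > 0, the function η ↦ P_{η,0}(B_{η,Δ}) is continuous and monotonically decreasing on [0, ∞). -/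
open MeasureTheory ProbabilityTheory

open Real Set Filter Topology

namespace Lemma3Aux

/-- standard normal density -/
noncomputable def nphi (x : ℝ) : ℝ := (Real.sqrt (2 * π))⁻¹ * Real.exp (-x ^ 2 / 2)

/-- standard normal CDF (as an integral) -/
noncomputable def nPhi (x : ℝ) : ℝ := ∫ t in Set.Iic x, nphi t

lemma nphi_pos (x : ℝ) : 0 < nphi x := by
  have h2π : (0:ℝ) < 2 * π := by positivity
  have := Real.sqrt_pos.2 h2π
  unfold nphi; positivity

lemma nphi_nonneg (x : ℝ) : 0 ≤ nphi x := (nphi_pos x).le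

lemma continuous_nphi : Continuous nphi := by unfold nphi; fun_prop

lemma integrable_nphi : Integrable nphi := by
  unfold nphi
  have : Integrable (fun x : ℝ => Real.exp (-(1/2) * x ^ 2)) :=
    integrable_exp_neg_mul_sq (by norm_num)
  refine (this.const_mul (Real.sqrt (2 * π))⁻¹).congr ?_
  filter_upwards with x
  ring_nf

lemma integral_nphi : ∫ x, nphi x = 1 := by
  unfold nphi
  rw [MeasureTheory.integral_const_mul]
  have h : ∀ x : ℝ, Real.exp (-x ^ 2 / 2) = Real.exp (-(1/2) * x ^ 2) := fun x => by ring_nf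
  simp_rw [h]
  rw [integral_gaussian]
  rw [show π / (1/2 : ℝ) = 2 * π by ring]
  have : Real.sqrt (2*π) ≠ 0 := ne_of_gt (Real.sqrt_pos.2 (by positivity))
  field_simp

lemma nPhi_mono : Monotone nPhi := by
  intro x y hxy
  exact setIntegral_mono_set integrable_nphi.integrableOn
    (ae_of_all _ nphi_nonneg) (HasSubset.Subset.eventuallyLE (Iic_subset_Iic.2 hxy))

lemma nPhi_add_tail (x : ℝ) : nPhi x + ∫ t in Set.Ioi x, nphi t = 1 := by
  rw [nPhi, intervalIntegral.integral_Iic_add_Ioi integrable_nphi.integrableOn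
    integrable_nphi.integrableOn, integral_nphi]

lemma tail_eq (x : ℝ) : ∫ t in Set.Ioi x, nphi t = 1 - nPhi x := by
  have := nPhi_add_tail x; linarith

lemma tail_Ici_eq (x : ℝ) : ∫ t in Set.Ici x, nphi t = 1 - nPhi x := by
  rw [integral_Ici_eq_integral_Ioi, tail_eq]

lemma tail_pos (x : ℝ) : 0 < 1 - nPhi x := by
  rw [← tail_eq]
  rw [setIntegral_pos_iff_support_of_nonneg_ae (ae_of_all _ (fun t => nphi_nonneg t))
    integrable_nphi.integrableOn]
  have hsupp : Function.support nphi = Set.univ := by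
    ext t; simp [Function.mem_support, (nphi_pos t).ne']
  rw [hsupp, Set.univ_inter]
  simp [Real.volume_Ioi]

lemma nPhi_lt_one (x : ℝ) : nPhi x < 1 := by have := tail_pos x; linarith

lemma nPhi_nonneg (x : ℝ) : 0 ≤ nPhi x :=
  setIntegral_nonneg measurableSet_Iic (fun t _ => nphi_nonneg t)

lemma nPhi_eq (x : ℝ) : nPhi x = nPhi 0 + ∫ t in (0:ℝ)..x, nphi t := by
  have h := intervalIntegral.integral_Iic_sub_Iic
    (integrable_nphi.integrableOn (s := Set.Iic 0)) (integrable_nphi.integrableOn (s := Set.Iic x))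
  unfold nPhi
  unfold nPhi at h
  linarith

lemma hasDerivAt_nPhi (x : ℝ) : HasDerivAt nPhi (nphi x) x := by
  have hfun : nPhi = fun y => nPhi 0 + ∫ t in (0:ℝ)..y, nphi t := funext nPhi_eq
  rw [hfun]
  exact (intervalIntegral.integral_hasDerivAt_right
    integrable_nphi.intervalIntegrable
    continuous_nphi.stronglyMeasurable.stronglyMeasurableAtFilter
    continuous_nphi.continuousAt).const_add _

lemma continuous_nPhi : Continuous nPhi := by
  have : Differentiable ℝ nPhi := fun x => (hasDerivAt_nPhi x).differentiableAt
  exact this.continuous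

lemma hasDerivAt_nphi (x : ℝ) : HasDerivAt nphi (-x * nphi x) x := by
  have h1 : HasDerivAt (fun y : ℝ => -y ^ 2 / 2) (-x) x := by
    have h0 : HasDerivAt (fun y : ℝ => y ^ 2) (2 * x) x := by
      simpa using hasDerivAt_pow 2 x
    have := h0.neg.div_const 2
    refine this.congr_deriv ?_
    ring
  have h2 := (h1.exp).const_mul (Real.sqrt (2 * π))⁻¹
  unfold nphi
  refine h2.congr_deriv ?_
  ring

lemma tendsto_nPhi_atTop : Tendsto nPhi atTop (𝓝 1) := by
  have h1 : Tendsto (fun x => nPhi 0 + ∫ t in (0:ℝ)..x, nphi t) atTop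
      (𝓝 (nPhi 0 + ∫ t in Set.Ioi (0:ℝ), nphi t)) :=
    tendsto_const_nhds.add
      (intervalIntegral_tendsto_integral_Ioi 0 integrable_nphi.integrableOn tendsto_id)
  have : nPhi 0 + ∫ t in Set.Ioi (0:ℝ), nphi t = 1 := nPhi_add_tail 0
  rw [this] at h1
  exact h1.congr (fun x => (nPhi_eq x).symm)

lemma tendsto_mul_nphi_atTop : Tendsto (fun x => x * nphi x) atTop (𝓝 0) := by
  have hb : Tendsto (fun x : ℝ => (Real.sqrt (2 * π))⁻¹ * Real.exp (1/2) * (x * Real.exp (-x)))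
      atTop (𝓝 ((Real.sqrt (2 * π))⁻¹ * Real.exp (1/2) * 0)) := by
    refine Tendsto.const_mul _ ?_
    have := Real.tendsto_pow_mul_exp_neg_atTop_nhds_zero 1
    simpa using this
  rw [mul_zero] at hb
  refine squeeze_zero' ?_ ?_ hb
  · filter_upwards [eventually_ge_atTop (0:ℝ)] with x hx
    exact mul_nonneg hx (nphi_nonneg x)
  · filter_upwards [eventually_ge_atTop (0:ℝ)] with x hx
    unfold nphi
    have hexp : Real.exp (-x ^ 2 / 2) ≤ Real.exp (1/2) * Real.exp (-x) := by
      rw [← Real.exp_add]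
      apply Real.exp_le_exp.2
      nlinarith [sq_nonneg (x - 1)]
    calc x * ((Real.sqrt (2 * π))⁻¹ * Real.exp (-x ^ 2 / 2))
        ≤ x * ((Real.sqrt (2 * π))⁻¹ * (Real.exp (1/2) * Real.exp (-x))) := by
          apply mul_le_mul_of_nonneg_left _ hx
          apply mul_le_mul_of_nonneg_left hexp (by positivity)
      _ = (Real.sqrt (2 * π))⁻¹ * Real.exp (1/2) * (x * Real.exp (-x)) := by ring

/-- Mills-type bound: `x φ(x) ≤ (1+x²)(1−Φ(x))` for all `x`. -/
lemma mills (x : ℝ) : x * nphi x ≤ (1 + x ^ 2) * (1 - nPhi x) := by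
  set t : ℝ → ℝ := fun x => (1 - nPhi x) - x * nphi x / (1 + x ^ 2) with ht
  have hderiv : ∀ y : ℝ, HasDerivAt t (-(2 * nphi y) / (1 + y ^ 2) ^ 2) y := by
    intro y
    have h1 : HasDerivAt (fun z : ℝ => 1 - nPhi z) (-(nphi y)) y := (hasDerivAt_nPhi y).const_sub 1
    have hnum : HasDerivAt (fun z : ℝ => z * nphi z) (1 * nphi y + y * (-y * nphi y)) y :=
      (hasDerivAt_id y).mul (hasDerivAt_nphi y)
    have hden : HasDerivAt (fun z : ℝ => 1 + z ^ 2) (2 * y) y := by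
      have := ((hasDerivAt_id y).pow 2).const_add 1
      simpa using this
    have hd0 : (1 : ℝ) + y ^ 2 ≠ 0 := by positivity
    have hq := hnum.div hden hd0
    have := h1.sub hq
    refine this.congr_deriv ?_
    field_simp
    ring
  have hanti : Antitone t := by
    refine antitone_of_deriv_nonpos (fun y => (hderiv y).differentiableAt) (fun y => ?_)
    rw [(hderiv y).deriv]
    have : (0:ℝ) < (1 + y ^ 2) ^ 2 := by positivity
    have h2 := nphi_pos y
    apply div_nonpos_of_nonpos_of_nonneg <;> nlinarith
  have hlim : Tendsto t atTop (𝓝 0) := by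
    have h1 : Tendsto (fun x => 1 - nPhi x) atTop (𝓝 0) := by
      have := tendsto_nPhi_atTop.const_sub 1
      simpa using this
    have h2 : Tendsto (fun x => x * nphi x / (1 + x ^ 2)) atTop (𝓝 0) := by
      refine squeeze_zero' ?_ ?_ tendsto_mul_nphi_atTop
      · filter_upwards [eventually_ge_atTop (0:ℝ)] with x hx
        have := nphi_nonneg x; positivity
      · filter_upwards [eventually_ge_atTop (0:ℝ)] with x hx
        rw [div_le_iff₀ (by positivity : (0:ℝ) < 1 + x ^ 2)]
        have hxy : 0 ≤ x * nphi x := mul_nonneg hx (nphi_nonneg x)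
        nlinarith [sq_nonneg x]
    have := h1.sub h2
    simpa using this
  have hge : 0 ≤ t x := by
    refine le_of_tendsto hlim ?_
    filter_upwards [eventually_ge_atTop x] with y hy
    exact hanti hy
  have hd0 : (0:ℝ) < 1 + x ^ 2 := by positivity
  rw [ht] at hge
  simp only [sub_nonneg] at hge
  calc x * nphi x = (x * nphi x / (1 + x ^ 2)) * (1 + x ^ 2) := by field_simp
    _ ≤ (1 - nPhi x) * (1 + x ^ 2) := by
        apply mul_le_mul_of_nonneg_right hge hd0.le
    _ = (1 + x ^ 2) * (1 - nPhi x) := by ring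

/-- The Mills ratio comparison: `a Ψ(a) φ(b) ≤ b Ψ(b) φ(a)` for `0 ≤ a ≤ b`. -/
lemma key_ineq {a b : ℝ} (ha : 0 ≤ a) (hab : a ≤ b) :
    a * (1 - nPhi a) * nphi b ≤ b * (1 - nPhi b) * nphi a := by
  set r : ℝ → ℝ := fun x => x * (1 - nPhi x) / nphi x with hr
  have hderiv : ∀ y : ℝ,
      HasDerivAt r (((1 + y ^ 2) * (1 - nPhi y) - y * nphi y) / nphi y) y := by
    intro y
    have hnum : HasDerivAt (fun z : ℝ => z * (1 - nPhi z))
        (1 * (1 - nPhi y) + y * (-(nphi y))) y :=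
      (hasDerivAt_id y).mul ((hasDerivAt_nPhi y).const_sub 1)
    have hq := hnum.div (hasDerivAt_nphi y) (nphi_pos y).ne'
    refine hq.congr_deriv ?_
    have hphi := (nphi_pos y).ne'
    field_simp
    ring
  have hmono : Monotone r := by
    refine monotone_of_deriv_nonneg (fun y => (hderiv y).differentiableAt) (fun y => ?_)
    rw [(hderiv y).deriv]
    have h1 := mills y
    have h2 := nphi_pos y
    apply div_nonneg (by linarith) h2.le
  have hrab : r a ≤ r b := hmono hab
  rw [hr] at hrab
  simp only at hrab
  rw [div_le_div_iff₀ (nphi_pos a) (nphi_pos b)] at hrab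
  linarith

/-- Monotonicity of `a ↦ Ψ(√(a²+c))/Ψ(a)` on `[0,∞)`, for `c > 0`. -/
lemma psi_mono {c : ℝ} (hc : 0 < c) :
    MonotoneOn (fun a => (1 - nPhi (Real.sqrt (a ^ 2 + c))) / (1 - nPhi a)) (Set.Ici 0) := by
  have hcont : ContinuousOn (fun a => (1 - nPhi (Real.sqrt (a ^ 2 + c))) / (1 - nPhi a))
      (Set.Ici 0) := by
    apply ContinuousOn.div
    · exact (continuous_const.sub (continuous_nPhi.comp
        (Real.continuous_sqrt.comp ((continuous_pow 2).add continuous_const)))).continuousOn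
    · exact (continuous_const.sub continuous_nPhi).continuousOn
    · intro a _; exact (tail_pos a).ne'
  have hderiv : ∀ a ∈ interior (Set.Ici (0:ℝ)),
      HasDerivAt (fun a => (1 - nPhi (Real.sqrt (a ^ 2 + c))) / (1 - nPhi a))
        ((-(nphi (Real.sqrt (a ^ 2 + c))) * (a / Real.sqrt (a ^ 2 + c)) * (1 - nPhi a)
          - (1 - nPhi (Real.sqrt (a ^ 2 + c))) * (-(nphi a))) / (1 - nPhi a) ^ 2) a := by
    intro a ha
    rw [interior_Ici] at ha
    have ha' : (0:ℝ) < a := ha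
    have hpos : (0:ℝ) < a ^ 2 + c := by positivity
    have hsq : HasDerivAt (fun z : ℝ => z ^ 2 + c) (2 * a) a := by
      have := ((hasDerivAt_id a).pow 2).add_const c
      simpa using this
    have hsqrt : HasDerivAt (fun z : ℝ => Real.sqrt (z ^ 2 + c))
        (1 / (2 * Real.sqrt (a ^ 2 + c)) * (2 * a)) a :=
      (Real.hasDerivAt_sqrt hpos.ne').comp a hsq
    have hb : (0:ℝ) < Real.sqrt (a ^ 2 + c) := Real.sqrt_pos.2 hpos
    have hnum : HasDerivAt (fun z : ℝ => 1 - nPhi (Real.sqrt (z ^ 2 + c)))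
        (-(nphi (Real.sqrt (a ^ 2 + c))) * (a / Real.sqrt (a ^ 2 + c))) a := by
      have := ((hasDerivAt_nPhi (Real.sqrt (a ^ 2 + c))).comp a hsqrt).const_sub 1
      refine this.congr_deriv ?_
      field_simp
    have hden : HasDerivAt (fun z : ℝ => 1 - nPhi z) (-(nphi a)) a :=
      (hasDerivAt_nPhi a).const_sub 1
    exact hnum.div hden (tail_pos a).ne'
  refine monotoneOn_of_deriv_nonneg (convex_Ici 0) hcont
    (fun a ha => ((hderiv a ha).differentiableAt).differentiableWithinAt) ?_
  intro a ha
  rw [(hderiv a ha).deriv]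
  rw [interior_Ici] at ha
  have ha' : (0:ℝ) < a := ha
  set b := Real.sqrt (a ^ 2 + c) with hbdef
  have hpos : (0:ℝ) < a ^ 2 + c := by positivity
  have hb : (0:ℝ) < b := Real.sqrt_pos.2 hpos
  have hab : a ≤ b := by
    rw [hbdef]
    calc a = Real.sqrt (a ^ 2) := by rw [Real.sqrt_sq ha'.le]
    _ ≤ _ := Real.sqrt_le_sqrt (by linarith)
  have hkey := key_ineq ha'.le hab
  have h2 : (0:ℝ) < (1 - nPhi a) ^ 2 := by have := tail_pos a; positivity
  apply div_nonneg _ h2.le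
  have hexp : -(nphi b) * (a / b) * (1 - nPhi a) - (1 - nPhi b) * (-(nphi a))
      = (b * (1 - nPhi b) * nphi a - a * (1 - nPhi a) * nphi b) / b := by
    field_simp
    ring
  rw [hexp]
  apply div_nonneg (by linarith) hb.le
/-- The conditional-probability kernel. -/
noncomputable def Kfun (Δ a t : ℝ) : ℝ :=
  max 0 ((nPhi (Real.sqrt (a ^ 2 + Δ ^ 2 - t ^ 2)) - nPhi a) / (1 - nPhi a))

lemma Kfun_nonneg (Δ a t : ℝ) : 0 ≤ Kfun Δ a t := le_max_left _ _

lemma Kfun_le_one (Δ a t : ℝ) : Kfun Δ a t ≤ 1 := by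
  unfold Kfun
  apply max_le (by norm_num)
  rw [div_le_one (tail_pos a)]
  have := nPhi_lt_one (Real.sqrt (a ^ 2 + Δ ^ 2 - t ^ 2))
  linarith

lemma continuous_Kfun_a (Δ t : ℝ) : Continuous (fun a => Kfun Δ a t) := by
  unfold Kfun
  apply continuous_const.max
  apply Continuous.div
  · exact (continuous_nPhi.comp (Real.continuous_sqrt.comp (by fun_prop))).sub continuous_nPhi
  · exact continuous_const.sub continuous_nPhi
  · intro a; exact (tail_pos a).ne'
lemma continuous_Kfun_t (Δ a : ℝ) : Continuous (fun t => Kfun Δ a t) := by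
  unfold Kfun
  apply continuous_const.max
  apply Continuous.div
  · exact (continuous_nPhi.comp (Real.continuous_sqrt.comp (by fun_prop))).sub continuous_const
  · exact continuous_const
  · intro t; exact (tail_pos a).ne'

lemma Kfun_eq_of_pos {Δ a t : ℝ} (ha : 0 ≤ a) (hc : 0 < Δ ^ 2 - t ^ 2) :
    Kfun Δ a t = 1 - (1 - nPhi (Real.sqrt (a ^ 2 + (Δ ^ 2 - t ^ 2)))) / (1 - nPhi a) := by
  unfold Kfun
  have hb : a ≤ Real.sqrt (a ^ 2 + (Δ ^ 2 - t ^ 2)) := by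
    calc a = Real.sqrt (a ^ 2) := by rw [Real.sqrt_sq ha]
    _ ≤ _ := Real.sqrt_le_sqrt (by linarith)
  have harg : a ^ 2 + Δ ^ 2 - t ^ 2 = a ^ 2 + (Δ ^ 2 - t ^ 2) := by ring
  rw [harg]
  have hnum : 0 ≤ nPhi (Real.sqrt (a ^ 2 + (Δ ^ 2 - t ^ 2))) - nPhi a := by
    have := nPhi_mono hb; linarith
  rw [max_eq_right (div_nonneg hnum (tail_pos a).le)]
  have h0 := (tail_pos a).ne'
  field_simp
  ring

lemma Kfun_eq_zero {Δ a t : ℝ} (ha : 0 ≤ a) (hc : Δ ^ 2 - t ^ 2 ≤ 0) :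
    Kfun Δ a t = 0 := by
  unfold Kfun
  have hb : Real.sqrt (a ^ 2 + Δ ^ 2 - t ^ 2) ≤ a := by
    calc Real.sqrt (a ^ 2 + Δ ^ 2 - t ^ 2) ≤ Real.sqrt (a ^ 2) :=
      Real.sqrt_le_sqrt (by linarith)
    _ = a := Real.sqrt_sq ha
  have hnum : nPhi (Real.sqrt (a ^ 2 + Δ ^ 2 - t ^ 2)) - nPhi a ≤ 0 := by
    have := nPhi_mono hb; linarith
  exact max_eq_left (div_nonpos_of_nonpos_of_nonneg hnum (tail_pos a).le)

lemma Kfun_anti (Δ : ℝ) {a a' : ℝ} (ha : 0 ≤ a) (haa : a ≤ a') (t : ℝ) :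
    Kfun Δ a' t ≤ Kfun Δ a t := by
  rcases le_or_gt (Δ ^ 2 - t ^ 2) 0 with hc | hc
  · rw [Kfun_eq_zero ha hc, Kfun_eq_zero (le_trans ha haa) hc]
  · rw [Kfun_eq_of_pos ha hc, Kfun_eq_of_pos (le_trans ha haa) hc]
    have := psi_mono hc (Set.mem_Ici.2 ha) (Set.mem_Ici.2 (le_trans ha haa)) haa
    simp only at this
    linarith

lemma integrable_nphi_Kfun (Δ a : ℝ) : Integrable (fun t => nphi t * Kfun Δ a t) := by
  refine integrable_nphi.mono ?_ ?_
  · exact (continuous_nphi.mul (continuous_Kfun_t Δ a)).aestronglyMeasurable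
  · filter_upwards with t
    rw [Real.norm_eq_abs, Real.norm_eq_abs,
      abs_of_nonneg (mul_nonneg (nphi_nonneg t) (Kfun_nonneg Δ a t)),
      abs_of_nonneg (nphi_nonneg t)]
    calc nphi t * Kfun Δ a t ≤ nphi t * 1 :=
      mul_le_mul_of_nonneg_left (Kfun_le_one Δ a t) (nphi_nonneg t)
    _ = nphi t := mul_one _

/-- The integral representation of the conditional probability, as a function of `a = η/√2`. -/
noncomputable def Jfun (Δ a : ℝ) : ℝ := ∫ t, nphi t * Kfun Δ a t

lemma continuous_Jfun (Δ : ℝ) : Continuous (Jfun Δ) := by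
  refine MeasureTheory.continuous_of_dominated
    (F := fun a t => nphi t * Kfun Δ a t) (bound := nphi) ?_ ?_ integrable_nphi ?_
  · exact fun a => (continuous_nphi.mul (continuous_Kfun_t Δ a)).aestronglyMeasurable
  · intro a
    filter_upwards with t
    rw [Real.norm_eq_abs, abs_of_nonneg (mul_nonneg (nphi_nonneg t) (Kfun_nonneg Δ a t))]
    calc nphi t * Kfun Δ a t ≤ nphi t * 1 :=
      mul_le_mul_of_nonneg_left (Kfun_le_one Δ a t) (nphi_nonneg t)
    _ = nphi t := mul_one _
  · filter_upwards with t
    exact continuous_const.mul (continuous_Kfun_a Δ t)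

lemma Jfun_anti (Δ : ℝ) {a a' : ℝ} (ha : 0 ≤ a) (haa : a ≤ a') : Jfun Δ a' ≤ Jfun Δ a := by
  refine integral_mono (integrable_nphi_Kfun Δ a') (integrable_nphi_Kfun Δ a) ?_
  intro t
  exact mul_le_mul_of_nonneg_left (Kfun_anti Δ ha haa t) (nphi_nonneg t)


lemma rot_inv (u v : ℝ) :
    nphi ((u - v) / Real.sqrt 2) * nphi ((u + v) / Real.sqrt 2) = nphi u * nphi v := by
  unfold nphi
  have h2 : (Real.sqrt 2) ^ 2 = 2 := Real.sq_sqrt (by norm_num)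
  have key : -((u - v) / Real.sqrt 2) ^ 2 / 2 + -((u + v) / Real.sqrt 2) ^ 2 / 2
      = -u ^ 2 / 2 + -v ^ 2 / 2 := by
    rw [div_pow, div_pow, h2]; ring
  calc (Real.sqrt (2 * π))⁻¹ * rexp (-((u - v) / Real.sqrt 2) ^ 2 / 2) *
      ((Real.sqrt (2 * π))⁻¹ * rexp (-((u + v) / Real.sqrt 2) ^ 2 / 2))
      = (Real.sqrt (2 * π))⁻¹ * (Real.sqrt (2 * π))⁻¹ *
        rexp (-((u - v) / Real.sqrt 2) ^ 2 / 2 + -((u + v) / Real.sqrt 2) ^ 2 / 2) := by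
        rw [Real.exp_add]; ring
    _ = (Real.sqrt (2 * π))⁻¹ * (Real.sqrt (2 * π))⁻¹ * rexp (-u ^ 2 / 2 + -v ^ 2 / 2) := by
        rw [key]
    _ = _ := by rw [Real.exp_add]; ring

lemma nphi_eq_gaussianPDFReal (η x : ℝ) : gaussianPDFReal η 1 x = nphi (x - η) := by
  unfold gaussianPDFReal nphi
  norm_num

section MeasurePart

lemma measurableSet_halfPlaneU : MeasurableSet halfPlaneU :=
  measurableSet_le measurable_fst measurable_snd

lemma Bset_subset_halfPlane (η Δ : ℝ) : Bset η Δ ⊆ halfPlaneU := fun _ h => h.1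

lemma measurableSet_Bset (η Δ : ℝ) : MeasurableSet (Bset η Δ) := by
  have : Bset η Δ = halfPlaneU ∩ {ω : ℝ × ℝ | (ω.1 - η) ^ 2 + ω.2 ^ 2 ≤ η ^ 2 / 2 + Δ ^ 2} := rfl
  rw [this]
  exact measurableSet_halfPlaneU.inter (measurableSet_le (by fun_prop) measurable_const)

/-- The rotation-translation sending `(t,s)` to `(η + (t-s)/√2, (t+s)/√2)`. -/
noncomputable def Amap (η : ℝ) : ℝ × ℝ → ℝ × ℝ :=
  fun p => (η + (p.1 - p.2) / Real.sqrt 2, (p.1 + p.2) / Real.sqrt 2)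

lemma continuous_Amap (η : ℝ) : Continuous (Amap η) := by unfold Amap; fun_prop

/-- The linear part of `Amap`. -/
noncomputable def Lrot : (ℝ × ℝ) →L[ℝ] (ℝ × ℝ) :=
  LinearMap.toContinuousLinearMap
    (LinearMap.prod ((Real.sqrt 2)⁻¹ • (LinearMap.fst ℝ ℝ ℝ - LinearMap.snd ℝ ℝ ℝ))
      ((Real.sqrt 2)⁻¹ • (LinearMap.fst ℝ ℝ ℝ + LinearMap.snd ℝ ℝ ℝ)))

lemma Lrot_apply (p : ℝ × ℝ) :
    Lrot p = ((p.1 - p.2) / Real.sqrt 2, (p.1 + p.2) / Real.sqrt 2) := by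
  simp [Lrot, div_eq_inv_mul, ← mul_add, ← mul_sub, LinearMap.prod_apply]

lemma Lrot_det : Lrot.det = 1 := by
  have hmat : LinearMap.toMatrix (Module.Basis.finTwoProd ℝ) (Module.Basis.finTwoProd ℝ)
      (Lrot : (ℝ × ℝ) →ₗ[ℝ] (ℝ × ℝ))
      = Matrix.of ![![(Real.sqrt 2)⁻¹, -(Real.sqrt 2)⁻¹], ![(Real.sqrt 2)⁻¹, (Real.sqrt 2)⁻¹]] := by
    ext i j
    fin_cases i <;> fin_cases j <;>
      simp [LinearMap.toMatrix_apply, Lrot, Module.Basis.finTwoProd_zero, Module.Basis.finTwoProd_one,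
        div_eq_inv_mul]
  have : Lrot.det = (LinearMap.toMatrix (Module.Basis.finTwoProd ℝ) (Module.Basis.finTwoProd ℝ)
      (Lrot : (ℝ × ℝ) →ₗ[ℝ] (ℝ × ℝ))).det := (LinearMap.det_toMatrix _ _).symm
  rw [this, hmat]
  rw [Matrix.det_fin_two]
  simp only [Matrix.of_apply]
  have h2 : (Real.sqrt 2)⁻¹ * (Real.sqrt 2)⁻¹ = 2⁻¹ := by
    rw [← mul_inv]
    rw [Real.mul_self_sqrt (by norm_num : (0:ℝ) ≤ 2)]
  norm_num [Matrix.cons_val_zero, Matrix.cons_val_one]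
  nlinarith [h2]

lemma hasFDerivAt_Amap (η : ℝ) (p : ℝ × ℝ) : HasFDerivAt (Amap η) Lrot p := by
  have hfun : Amap η = fun q => (η, (0:ℝ)) + Lrot q := by
    funext q
    rw [Lrot_apply]
    simp [Amap, Prod.ext_iff]
  rw [hfun]
  exact (Lrot.hasFDerivAt).const_add _

lemma sqrt2_pos : (0:ℝ) < Real.sqrt 2 := Real.sqrt_pos.2 (by norm_num)
lemma sqrt2_sq : Real.sqrt 2 * Real.sqrt 2 = 2 := Real.mul_self_sqrt (by norm_num)

lemma Amap_injective (η : ℝ) : Function.Injective (Amap η) := by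
  intro p q h
  have h1 := congrArg Prod.fst h
  have h2 := congrArg Prod.snd h
  simp only [Amap] at h1 h2
  have hs := sqrt2_pos.ne'
  have e1 : p.1 - p.2 = q.1 - q.2 := by
    field_simp at h1; linarith
  have e2 : p.1 + p.2 = q.1 + q.2 := by
    field_simp at h2; linarith
  exact Prod.ext_iff.mpr ⟨by linarith, by linarith⟩

lemma Amap_surjective (η : ℝ) : Function.Surjective (Amap η) := by
  intro q
  refine ⟨((q.1 - η + q.2) * Real.sqrt 2 / 2, (q.2 - q.1 + η) * Real.sqrt 2 / 2), ?_⟩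
  have hs := sqrt2_pos.ne'
  have h2 := sqrt2_sq
  simp only [Amap, Prod.ext_iff]
  constructor
  · field_simp
    nlinarith [h2]
  · field_simp
    nlinarith [h2]

/-- Change of variables for the rotated Gaussian integral. -/
lemma integral_comp_Amap (η : ℝ) {S : Set (ℝ × ℝ)} (hS : MeasurableSet S) :
    ∫ p in S, nphi (p.1 - η) * nphi p.2 = ∫ p in (Amap η) ⁻¹' S, nphi p.1 * nphi p.2 := by
  have hpre : MeasurableSet ((Amap η) ⁻¹' S) := (continuous_Amap η).measurable hS
  have himg : Amap η '' ((Amap η) ⁻¹' S) = S := Set.image_preimage_eq S (Amap_surjective η)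
  have h := MeasureTheory.integral_image_eq_integral_abs_det_fderiv_smul
    (volume : Measure (ℝ × ℝ)) hpre
    (fun x _ => (hasFDerivAt_Amap η x).hasFDerivWithinAt)
    ((Amap_injective η).injOn) (fun p => nphi (p.1 - η) * nphi p.2)
  rw [himg] at h
  rw [h]
  refine setIntegral_congr_fun hpre (fun x _ => ?_)
  rw [Lrot_det]
  simp only [abs_one, one_smul, Amap, add_sub_cancel_left]
  exact rot_inv x.1 x.2

/-- Density form of `Qmeas`. -/
lemma Qmeas_eq (η : ℝ) : Qmeas η 0 = (volume : Measure (ℝ × ℝ)).withDensity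
    (fun p => ENNReal.ofReal (nphi (p.1 - η)) * ENNReal.ofReal (nphi p.2)) := by
  refine Measure.prod_eq (fun s t hs ht => ?_)
  rw [withDensity_apply _ (hs.prod ht), MeasureTheory.Measure.volume_eq_prod, ← Measure.prod_restrict,
    lintegral_prod_mul
      (show Measurable fun x : ℝ => ENNReal.ofReal (nphi (x - η)) from
        ((continuous_nphi.comp (continuous_id.sub continuous_const)).measurable).ennreal_ofReal).aemeasurable
      (show Measurable fun y : ℝ => ENNReal.ofReal (nphi y) from
        continuous_nphi.measurable.ennreal_ofReal).aemeasurable,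
    gaussianReal_apply η one_ne_zero s, gaussianReal_apply 0 one_ne_zero t]
  congr 1
  · refine lintegral_congr (fun x => ?_)
    rw [gaussianPDF, nphi_eq_gaussianPDFReal]
  · refine lintegral_congr (fun y => ?_)
    rw [gaussianPDF, nphi_eq_gaussianPDFReal, sub_zero]

lemma integrable_prod_nphi (η : ℝ) :
    Integrable (fun p : ℝ × ℝ => nphi (p.1 - η) * nphi p.2) := by
  have h := MeasureTheory.Integrable.mul_prod (Integrable.comp_sub_right integrable_nphi η)
    integrable_nphi
  rwa [← MeasureTheory.Measure.volume_eq_prod] at h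

lemma Qmeas_toReal (η : ℝ) {S : Set (ℝ × ℝ)} (hS : MeasurableSet S) :
    (Qmeas η 0 S).toReal = ∫ p in S, nphi (p.1 - η) * nphi p.2 := by
  rw [Qmeas_eq, withDensity_apply _ hS]
  have h1 : ∫⁻ p in S, ENNReal.ofReal (nphi (p.1 - η)) * ENNReal.ofReal (nphi p.2)
      = ∫⁻ p in S, ENNReal.ofReal (nphi (p.1 - η) * nphi p.2) :=
    lintegral_congr (fun p => (ENNReal.ofReal_mul (nphi_nonneg _)).symm)
  rw [h1, ← ofReal_integral_eq_lintegral_ofReal ((integrable_prod_nphi η).integrableOn)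
      (ae_of_all _ (fun p => mul_nonneg (nphi_nonneg _) (nphi_nonneg _))),
    ENNReal.toReal_ofReal]
  exact setIntegral_nonneg hS (fun p _ => mul_nonneg (nphi_nonneg _) (nphi_nonneg _))

lemma Amap_mem_halfPlane_iff (η : ℝ) (p : ℝ × ℝ) :
    Amap η p ∈ halfPlaneU ↔ η / Real.sqrt 2 ≤ p.2 := by
  have hs := sqrt2_pos
  have key : (p.1 + p.2) / Real.sqrt 2 - (η + (p.1 - p.2) / Real.sqrt 2)
      = Real.sqrt 2 * (p.2 - η / Real.sqrt 2) := by
    have hs := sqrt2_pos.ne'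
    field_simp
    linear_combination (-p.2) * sqrt2_sq
  simp only [Amap, halfPlaneU, Set.mem_setOf_eq]
  constructor
  · intro h
    have h0 : 0 ≤ Real.sqrt 2 * (p.2 - η / Real.sqrt 2) := by rw [← key]; linarith
    nlinarith [h0, hs]
  · intro h
    have h0 : 0 ≤ Real.sqrt 2 * (p.2 - η / Real.sqrt 2) :=
      mul_nonneg hs.le (by linarith)
    linarith [h0, key]

lemma Amap_preimage_halfPlane (η : ℝ) :
    (Amap η) ⁻¹' halfPlaneU = {p : ℝ × ℝ | η / Real.sqrt 2 ≤ p.2} := by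
  ext p
  rw [Set.mem_preimage, Amap_mem_halfPlane_iff]
  rfl

lemma Amap_norm (η : ℝ) (p : ℝ × ℝ) :
    ((Amap η p).1 - η) ^ 2 + (Amap η p).2 ^ 2 = p.1 ^ 2 + p.2 ^ 2 := by
  simp only [Amap, add_sub_cancel_left]
  rw [div_pow, div_pow, Real.sq_sqrt (by norm_num : (0:ℝ) ≤ 2)]
  ring

lemma Amap_preimage_Bset (η Δ : ℝ) :
    (Amap η) ⁻¹' (Bset η Δ) = {p : ℝ × ℝ | η / Real.sqrt 2 ≤ p.2 ∧
      p.1 ^ 2 + p.2 ^ 2 ≤ (η / Real.sqrt 2) ^ 2 + Δ ^ 2} := by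
  ext p
  rw [Set.mem_preimage]
  have h3 : η ^ 2 / 2 = (η / Real.sqrt 2) ^ 2 := by
    rw [div_pow, Real.sq_sqrt (by norm_num : (0:ℝ) ≤ 2)]
  constructor
  · rintro ⟨h1, h2⟩
    rw [Amap_norm] at h2
    exact ⟨(Amap_mem_halfPlane_iff η p).1 h1, by linarith⟩
  · rintro ⟨h1, h2⟩
    refine ⟨(Amap_mem_halfPlane_iff η p).2 h1, ?_⟩
    rw [Amap_norm]
    linarith

lemma half_int (a : ℝ) :
    ∫ p in {p : ℝ × ℝ | a ≤ p.2}, nphi p.1 * nphi p.2 = 1 - nPhi a := by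
  have hset : {p : ℝ × ℝ | a ≤ p.2} = (Set.univ : Set ℝ) ×ˢ Set.Ici a := by
    ext p; simp [Set.mem_prod]
  rw [hset, MeasureTheory.Measure.volume_eq_prod, setIntegral_prod_mul, setIntegral_univ,
    integral_nphi, tail_Ici_eq, one_mul]

lemma circ_int {a : ℝ} (ha : 0 ≤ a) (Δ : ℝ) :
    ∫ p in {p : ℝ × ℝ | a ≤ p.2 ∧ p.1 ^ 2 + p.2 ^ 2 ≤ a ^ 2 + Δ ^ 2}, nphi p.1 * nphi p.2
      = ∫ t, nphi t * max 0 (nPhi (Real.sqrt (a ^ 2 + Δ ^ 2 - t ^ 2)) - nPhi a) := by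
  set T : Set (ℝ × ℝ) := {p : ℝ × ℝ | a ≤ p.2 ∧ p.1 ^ 2 + p.2 ^ 2 ≤ a ^ 2 + Δ ^ 2} with hT
  have hTmeas : MeasurableSet T := by
    have : T = {p : ℝ × ℝ | a ≤ p.2} ∩ {p : ℝ × ℝ | p.1 ^ 2 + p.2 ^ 2 ≤ a ^ 2 + Δ ^ 2} := rfl
    rw [this]
    exact (measurableSet_le measurable_const measurable_snd).inter
      (measurableSet_le (by fun_prop) measurable_const)
  have hint : Integrable (T.indicator (fun p : ℝ × ℝ => nphi p.1 * nphi p.2)) := by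
    have h := (MeasureTheory.Integrable.mul_prod integrable_nphi integrable_nphi)
    rw [← MeasureTheory.Measure.volume_eq_prod] at h
    exact h.indicator hTmeas
  rw [← integral_indicator hTmeas, MeasureTheory.Measure.volume_eq_prod]
  rw [MeasureTheory.integral_prod _ (by rwa [← MeasureTheory.Measure.volume_eq_prod])]
  refine integral_congr_ae (Filter.Eventually.of_forall (fun t => ?_))
  show (∫ s, T.indicator (fun p : ℝ × ℝ => nphi p.1 * nphi p.2) (t, s))
      = nphi t * max 0 (nPhi (Real.sqrt (a ^ 2 + Δ ^ 2 - t ^ 2)) - nPhi a)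
  have hslice : (fun s => T.indicator (fun p : ℝ × ℝ => nphi p.1 * nphi p.2) (t, s))
      = Set.indicator {s : ℝ | a ≤ s ∧ t ^ 2 + s ^ 2 ≤ a ^ 2 + Δ ^ 2}
        (fun s => nphi t * nphi s) := by
    funext s
    simp [Set.indicator_apply, hT, Set.mem_setOf_eq]
  have hslicemeas : MeasurableSet {s : ℝ | a ≤ s ∧ t ^ 2 + s ^ 2 ≤ a ^ 2 + Δ ^ 2} := by
    have : {s : ℝ | a ≤ s ∧ t ^ 2 + s ^ 2 ≤ a ^ 2 + Δ ^ 2}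
        = {s : ℝ | a ≤ s} ∩ {s : ℝ | t ^ 2 + s ^ 2 ≤ a ^ 2 + Δ ^ 2} := rfl
    rw [this]
    exact (measurableSet_le measurable_const measurable_id).inter
      (measurableSet_le (by fun_prop) measurable_const)
  rw [hslice, integral_indicator hslicemeas, integral_const_mul]
  rcases lt_or_ge 0 (Δ ^ 2 - t ^ 2) with hc | hc
  · -- nonempty slice: an interval
    have hargnn : (0:ℝ) ≤ a ^ 2 + (Δ ^ 2 - t ^ 2) := by nlinarith
    set ρ := Real.sqrt (a ^ 2 + (Δ ^ 2 - t ^ 2)) with hρ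
    have hρnn : 0 ≤ ρ := Real.sqrt_nonneg _
    have hsq : ρ ^ 2 = a ^ 2 + (Δ ^ 2 - t ^ 2) := Real.sq_sqrt hargnn
    have hle : a ≤ ρ := by
      rw [hρ]
      calc a = Real.sqrt (a ^ 2) := (Real.sqrt_sq ha).symm
      _ ≤ _ := Real.sqrt_le_sqrt (by linarith)
    have hset2 : {s : ℝ | a ≤ s ∧ t ^ 2 + s ^ 2 ≤ a ^ 2 + Δ ^ 2} = Set.Icc a ρ := by
      ext s
      simp only [Set.mem_setOf_eq, Set.mem_Icc]
      constructor
      · rintro ⟨h1, h2⟩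
        refine ⟨h1, ?_⟩
        rw [hρ]
        exact (Real.le_sqrt (le_trans ha h1) hargnn).mpr (by linarith)
      · rintro ⟨h1, h2⟩
        refine ⟨h1, ?_⟩
        nlinarith [hsq]
    rw [hset2]
    have hIoc : ∫ s in Set.Icc a ρ, nphi s = nPhi ρ - nPhi a := by
      rw [MeasureTheory.integral_Icc_eq_integral_Ioc]
      have h := intervalIntegral.integral_Iic_sub_Iic
        (integrable_nphi.integrableOn (s := Set.Iic a)) (integrable_nphi.integrableOn (s := Set.Iic ρ))
      rw [intervalIntegral.integral_of_le hle] at h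
      unfold nPhi
      linarith
    rw [hIoc]
    congr 1
    have harg : a ^ 2 + Δ ^ 2 - t ^ 2 = a ^ 2 + (Δ ^ 2 - t ^ 2) := by ring
    rw [harg, ← hρ]
    exact (max_eq_right (by have := nPhi_mono hle; linarith)).symm
  · -- empty slice (up to measure zero)
    have hsub : {s : ℝ | a ≤ s ∧ t ^ 2 + s ^ 2 ≤ a ^ 2 + Δ ^ 2} ⊆ {a} := by
      intro s hs
      obtain ⟨h1, h2⟩ := hs
      have hs2 : s ^ 2 ≤ a ^ 2 := by nlinarith
      have : s ≤ a := by
        calc s = Real.sqrt (s ^ 2) := (Real.sqrt_sq (le_trans ha h1)).symm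
        _ ≤ Real.sqrt (a ^ 2) := Real.sqrt_le_sqrt hs2
        _ = a := Real.sqrt_sq ha
      simp [le_antisymm this h1]
    have h0 : volume {s : ℝ | a ≤ s ∧ t ^ 2 + s ^ 2 ≤ a ^ 2 + Δ ^ 2} = 0 :=
      measure_mono_null hsub (volume_singleton)
    rw [Measure.restrict_eq_zero.mpr h0]
    have hmax : max 0 (nPhi (Real.sqrt (a ^ 2 + Δ ^ 2 - t ^ 2)) - nPhi a) = 0 := by
      have hb : Real.sqrt (a ^ 2 + Δ ^ 2 - t ^ 2) ≤ a := by
        calc Real.sqrt (a ^ 2 + Δ ^ 2 - t ^ 2) ≤ Real.sqrt (a ^ 2) :=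
          Real.sqrt_le_sqrt (by linarith)
        _ = a := Real.sqrt_sq ha
      have := nPhi_mono hb
      exact max_eq_left (by linarith)
    rw [hmax]
    simp

lemma max_div_pos {x d : ℝ} (hd : 0 < d) : max 0 (x / d) = max 0 x / d := by
  rcases le_total x 0 with h | h
  · rw [max_eq_left (div_nonpos_of_nonpos_of_nonneg h hd.le), max_eq_left h, zero_div]
  · rw [max_eq_right (div_nonneg h hd.le), max_eq_right h]

lemma Jfun_eq (Δ a : ℝ) :
    Jfun Δ a = (∫ t, nphi t * max 0 (nPhi (Real.sqrt (a ^ 2 + Δ ^ 2 - t ^ 2)) - nPhi a))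
      / (1 - nPhi a) := by
  unfold Jfun Kfun
  rw [← integral_div]
  refine integral_congr_ae (Filter.Eventually.of_forall (fun t => ?_))
  show nphi t * max 0 ((nPhi (Real.sqrt (a ^ 2 + Δ ^ 2 - t ^ 2)) - nPhi a) / (1 - nPhi a))
      = nphi t * max 0 (nPhi (Real.sqrt (a ^ 2 + Δ ^ 2 - t ^ 2)) - nPhi a) / (1 - nPhi a)
  rw [max_div_pos (tail_pos a)]
  ring

/-- The integral representation of the conditional probability. -/
lemma Pmeas_repr (Δ : ℝ) {η : ℝ} (hη : 0 ≤ η) :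
    (Pmeas η 0 (Bset η Δ)).toReal = Jfun Δ (η / Real.sqrt 2) := by
  set a := η / Real.sqrt 2 with hadef
  have ha : 0 ≤ a := div_nonneg hη sqrt2_pos.le
  have hQU : (Qmeas η 0 halfPlaneU).toReal = 1 - nPhi a := by
    rw [Qmeas_toReal η measurableSet_halfPlaneU, integral_comp_Amap η measurableSet_halfPlaneU,
      Amap_preimage_halfPlane, half_int]
  have hQB : (Qmeas η 0 (Bset η Δ)).toReal
      = ∫ t, nphi t * max 0 (nPhi (Real.sqrt (a ^ 2 + Δ ^ 2 - t ^ 2)) - nPhi a) := by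
    rw [Qmeas_toReal η (measurableSet_Bset η Δ), integral_comp_Amap η (measurableSet_Bset η Δ),
      Amap_preimage_Bset, circ_int ha Δ]
  have hUfin : Qmeas η 0 halfPlaneU ≠ ⊤ := by
    have : IsProbabilityMeasure (Qmeas η 0) := by
      unfold Qmeas; infer_instance
    exact (measure_lt_top _ _).ne
  have hBfin : Qmeas η 0 (Bset η Δ) ≠ ⊤ := by
    have : IsProbabilityMeasure (Qmeas η 0) := by
      unfold Qmeas; infer_instance
    exact (measure_lt_top _ _).ne
  have hcond : Pmeas η 0 (Bset η Δ) = (Qmeas η 0 halfPlaneU)⁻¹ * Qmeas η 0 (Bset η Δ) := by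
    unfold Pmeas
    rw [ProbabilityTheory.cond_apply measurableSet_halfPlaneU,
      Set.inter_eq_self_of_subset_right (Bset_subset_halfPlane η Δ)]
  rw [hcond, ENNReal.toReal_mul, ENNReal.toReal_inv, hQU, hQB, Jfun_eq]
  rw [inv_mul_eq_div]

end MeasurePart

end Lemma3Aux


/-- Lemma 3, part 1: for fixed `Δ > 0`, `η ↦ P_{η,0}(B_{η,Δ})` is continuous and
monotonically decreasing on `[0, ∞)`. -/
theorem prob_Bset_continuous_and_antitone (Δ : ℝ) (hΔ : 0 < Δ) :
    ContinuousOn (fun η : ℝ => (Pmeas η 0 (Bset η Δ)).toReal) (Set.Ici 0)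
      ∧ AntitoneOn (fun η : ℝ => (Pmeas η 0 (Bset η Δ)).toReal) (Set.Ici 0) := by
  constructor
  · have hcont : Continuous (fun η : ℝ => Lemma3Aux.Jfun Δ (η / Real.sqrt 2)) :=
      (Lemma3Aux.continuous_Jfun Δ).comp (continuous_id.div_const _)
    refine hcont.continuousOn.congr (fun η hη => ?_)
    exact Lemma3Aux.Pmeas_repr Δ (Set.mem_Ici.1 hη)
  · intro η hη η' hη' h
    show (Pmeas η' 0 (Bset η' Δ)).toReal ≤ (Pmeas η 0 (Bset η Δ)).toReal
    rw [Lemma3Aux.Pmeas_repr Δ (Set.mem_Ici.1 hη), Lemma3Aux.Pmeas_repr Δ (Set.mem_Ici.1 hη')]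
    refine Lemma3Aux.Jfun_anti Δ (div_nonneg (Set.mem_Ici.1 hη) Lemma3Aux.sqrt2_pos.le) ?_
    gcongr
end

section
/- Let P_{0,θ} be the product measure N(0,1) × N(θ,1) on ℝ² conditioned on 𝕌 = {(x,y) : x ≤ y}, and for r > 0 and θ ∈ ℝ define B*_{θ,r} = {(x,y) ∈ 𝕌 : x² + (y − θ)² ≤ (min(θ,0))²/2 + r²}. Then for every θ ∈ ℝ and r > 0, P_{0,θ}(B*_{θ,r}) ≥ F_{χ²₃}(r²), where F_{χ²₃}(x) = 2Φ(√x) − 1 − √x e^{−x/2}/√(π/2) is the chi-squared(3) cumulative distribution function. -/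
open MeasureTheory ProbabilityTheory

/-- The cumulative distribution function of the chi-squared distribution with 3 degrees of
freedom, `F_{χ²₃}(x) = 2Φ(√x) − 1 − √x e^{−x/2}/√(π/2)` for `x > 0` and `0` for `x ≤ 0`. -/
noncomputable def chiSq3CDF (x : ℝ) : ℝ :=
  if 0 < x then
    2 * stdNormalCDF (Real.sqrt x) - 1 - Real.sqrt x * Real.exp (-x / 2) / Real.sqrt (Real.pi / 2)
  else 0

/-- The circle section `B*_{θ,r} = {(x,y) ∈ 𝕌 : x² + (y − θ)² ≤ (θ ∧ 0)²/2 + r²}`. -/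
def BstarSet (θ r : ℝ) : Set (ℝ × ℝ) :=
  {ω : ℝ × ℝ | ω ∈ halfPlaneU ∧ ω.1 ^ 2 + (ω.2 - θ) ^ 2 ≤ (min θ 0) ^ 2 / 2 + r ^ 2}

open Real Set Filter
open scoped ENNReal NNReal Topology

namespace BstarAux

noncomputable def pdf01 : ℝ → ℝ := gaussianPDFReal 0 1

lemma pdf01_eq (x : ℝ) : pdf01 x = (Real.sqrt (2 * π))⁻¹ * rexp (- x ^ 2 / 2) := by
  simp [pdf01, gaussianPDFReal]

lemma pdf01_nonneg (x : ℝ) : 0 ≤ pdf01 x := gaussianPDFReal_nonneg 0 1 x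

lemma pdf01_pos (x : ℝ) : 0 < pdf01 x := gaussianPDFReal_pos 0 1 x one_ne_zero

lemma continuous_pdf01 : Continuous pdf01 := by
  have : Continuous (gaussianPDFReal 0 1) := by
    rw [gaussianPDFReal_def]; fun_prop
  exact this

lemma pdf01_even (x : ℝ) : pdf01 (-x) = pdf01 x := by
  simp [pdf01_eq]

lemma stdNormalCDF_eq_integral (x : ℝ) :
    stdNormalCDF x = ∫ t in Iic x, pdf01 t := by
  rw [stdNormalCDF, gaussianReal_apply_eq_integral 0 one_ne_zero]
  exact ENNReal.toReal_ofReal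
    (setIntegral_nonneg measurableSet_Iic fun t _ => pdf01_nonneg t)

lemma integrable_pdf01 : Integrable pdf01 := integrable_gaussianPDFReal 0 1

lemma integrableOn_pdf01 (s : Set ℝ) : IntegrableOn pdf01 s := integrable_pdf01.integrableOn

lemma gauss_ne_top (s : Set ℝ) : gaussianReal 0 1 s ≠ ∞ := measure_ne_top _ s

lemma stdNormalCDF_sub (x y : ℝ) (h : x ≤ y) :
    stdNormalCDF y - stdNormalCDF x = ∫ t in x..y, pdf01 t := by
  rw [intervalIntegral.integral_of_le h, stdNormalCDF_eq_integral, stdNormalCDF_eq_integral,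
    ← Iic_union_Ioc_eq_Iic h,
    setIntegral_union (Iic_disjoint_Ioc le_rfl) measurableSet_Ioc
      (integrableOn_pdf01 _) (integrableOn_pdf01 _)]
  ring

lemma hasDerivAt_stdNormalCDF (x : ℝ) : HasDerivAt stdNormalCDF (pdf01 x) x := by
  have hfun : stdNormalCDF = fun u => stdNormalCDF 0 + ∫ t in (0:ℝ)..u, pdf01 t := by
    funext u
    rcases le_total 0 u with h | h
    · rw [← stdNormalCDF_sub 0 u h]; ring
    · rw [intervalIntegral.integral_symm, ← stdNormalCDF_sub u 0 h]; ring
  have h1 : HasDerivAt (fun u => ∫ t in (0:ℝ)..u, pdf01 t) (pdf01 x) x := by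
    refine intervalIntegral.integral_hasDerivAt_right
      ((continuous_pdf01.intervalIntegrable 0 x)) ?_ continuous_pdf01.continuousAt
    exact continuous_pdf01.stronglyMeasurable.stronglyMeasurableAtFilter
  rw [hfun]
  simpa using h1.const_add (stdNormalCDF 0)

lemma stdNormalCDF_mono : Monotone stdNormalCDF := by
  intro x y h
  exact ENNReal.toReal_mono (gauss_ne_top _) (measure_mono (Iic_subset_Iic.2 h))

lemma stdNormalCDF_le_one (x : ℝ) : stdNormalCDF x ≤ 1 := by
  rw [stdNormalCDF]
  have := prob_le_one (μ := gaussianReal 0 1) (s := Iic x)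
  simpa using ENNReal.toReal_mono (by simp) this

lemma stdNormalCDF_pos (x : ℝ) : 0 < stdNormalCDF x := by
  have h := stdNormalCDF_sub (x - 1) x (by linarith)
  have hpos : 0 < ∫ t in (x-1)..x, pdf01 t := by
    apply intervalIntegral.intervalIntegral_pos_of_pos_on
      (continuous_pdf01.intervalIntegrable _ _) (fun t _ => pdf01_pos t) (by linarith)
  have h0 : 0 ≤ stdNormalCDF (x - 1) := ENNReal.toReal_nonneg
  linarith

lemma gauss_singleton (x : ℝ) : gaussianReal 0 1 {x} = 0 :=
  gaussianReal_absolutelyContinuous 0 one_ne_zero (volume_singleton)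

lemma gauss_Iic (x : ℝ) : gaussianReal 0 1 (Iic x) = ENNReal.ofReal (stdNormalCDF x) := by
  rw [stdNormalCDF, ENNReal.ofReal_toReal (gauss_ne_top _)]

lemma stdNormalCDF_neg (x : ℝ) : stdNormalCDF (-x) = 1 - stdNormalCDF x := by
  have hmap : (gaussianReal 0 1).map (fun y => (-1 : ℝ) * y) = gaussianReal 0 1 := by
    rw [gaussianReal_map_const_mul (-1)]
    norm_num
  have h1 : gaussianReal 0 1 (Iic (-x)) = gaussianReal 0 1 (Ici x) := by
    conv_lhs => rw [← hmap]
    rw [Measure.map_apply (by fun_prop) measurableSet_Iic]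
    congr 1
    ext y
    simp only [mem_preimage, mem_Iic, mem_Ici]
    constructor <;> intro h <;> linarith
  have h2 : gaussianReal 0 1 (Ici x) = gaussianReal 0 1 (Ioi x) := by
    rw [← Ioi_union_left, measure_union (by simp) (measurableSet_singleton x),
      gauss_singleton, add_zero]
  have h3 : gaussianReal 0 1 (Ioi x) = 1 - gaussianReal 0 1 (Iic x) := by
    rw [← compl_Iic]
    exact prob_compl_eq_one_sub measurableSet_Iic
  rw [stdNormalCDF, h1, h2, h3, ENNReal.toReal_sub_of_le (prob_le_one) (by simp)]
  simp [stdNormalCDF]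

lemma stdNormalCDF_zero : stdNormalCDF 0 = 1 / 2 := by
  have := stdNormalCDF_neg 0
  rw [neg_zero] at this
  linarith

lemma stdNormalCDF_half_le (x : ℝ) (hx : 0 ≤ x) : (1:ℝ)/2 ≤ stdNormalCDF x := by
  rw [← stdNormalCDF_zero]; exact stdNormalCDF_mono hx
lemma hasDerivAt_pdf01 (x : ℝ) : HasDerivAt pdf01 (-x * pdf01 x) x := by
  have h : HasDerivAt (fun x : ℝ => (Real.sqrt (2 * π))⁻¹ * rexp (- x ^ 2 / 2))
      ((Real.sqrt (2 * π))⁻¹ * (rexp (- x ^ 2 / 2) * (-x))) x := by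
    have hu : HasDerivAt (fun x : ℝ => - x ^ 2 / 2) (-x) x := by
      have := ((hasDerivAt_pow 2 x).neg).div_const 2
      simpa using this.congr_deriv (by ring)
    exact ((Real.hasDerivAt_exp _).comp x hu).const_mul _
  have : pdf01 = fun x : ℝ => (Real.sqrt (2 * π))⁻¹ * rexp (- x ^ 2 / 2) := funext pdf01_eq
  rw [this]
  convert h using 1
  simp only []; ring

lemma integrableOn_mul_pdf01 (s : Set ℝ) : IntegrableOn (fun x => -x * pdf01 x) s := by
  have h0 : Integrable (fun x : ℝ => x * rexp (-(1/2) * x ^ 2)) := integrable_mul_exp_neg_mul_sq (by norm_num)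
  have h1 : Integrable (fun x : ℝ => -x * pdf01 x) := by
    have := (h0.const_mul (-(Real.sqrt (2 * π))⁻¹))
    refine this.congr ?_
    refine ae_of_all _ fun x => ?_
    simp only []
    rw [pdf01_eq]
    ring_nf
  exact h1.integrableOn

lemma tendsto_pdf01_atBot : Tendsto pdf01 atBot (𝓝 0) := by
  have hs : Tendsto (fun x : ℝ => - x ^ 2 / 2) atBot atBot := by
    have h1 : Tendsto (fun x : ℝ => x ^ 2) atBot atTop := by
      have hneg : Tendsto (fun x : ℝ => -x) atBot atTop := tendsto_neg_atBot_atTop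
      have := hneg.atTop_mul_atTop₀ hneg
      refine this.congr fun x => by ring
    have h2 : Tendsto (fun x : ℝ => x ^ 2 / 2) atBot atTop := h1.atTop_div_const (by norm_num)
    exact Tendsto.congr (fun x => by simp [Function.comp]; ring) (tendsto_neg_atTop_atBot.comp h2)
  have := (Real.tendsto_exp_atBot).comp hs
  have h3 : Tendsto (fun x : ℝ => (Real.sqrt (2 * π))⁻¹ * rexp (- x ^ 2 / 2)) atBot
      (𝓝 ((Real.sqrt (2 * π))⁻¹ * 0)) := this.const_mul _
  simp only [mul_zero] at h3
  refine h3.congr fun x => (pdf01_eq x).symm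

lemma integral_neg_mul_pdf01 (a : ℝ) : ∫ x in Iic a, -x * pdf01 x = pdf01 a := by
  have := MeasureTheory.integral_Iic_of_hasDerivAt_of_tendsto
    (f := pdf01) (f' := fun x => -x * pdf01 x) (a := a) (m := 0)
    (hasDerivAt_pdf01 a).continuousAt.continuousWithinAt
    (fun x _ => hasDerivAt_pdf01 x) (integrableOn_mul_pdf01 _) tendsto_pdf01_atBot
  simpa using this

lemma mills (t : ℝ) (ht : 0 ≤ t) : t * stdNormalCDF (-t) ≤ pdf01 t := by
  have h1 : t * stdNormalCDF (-t) = ∫ x in Iic (-t), t * pdf01 x := by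
    rw [stdNormalCDF_eq_integral, integral_const_mul]
  have h2 : (∫ x in Iic (-t), t * pdf01 x) ≤ ∫ x in Iic (-t), -x * pdf01 x := by
    refine setIntegral_mono_on ((integrableOn_pdf01 _).const_mul t)
      (integrableOn_mul_pdf01 _) measurableSet_Iic fun x hx => ?_
    have : t ≤ -x := by simpa [mem_Iic] using le_neg_of_le_neg hx
    exact mul_le_mul_of_nonneg_right this (pdf01_nonneg x)
  rw [h1]
  calc (∫ x in Iic (-t), t * pdf01 x) ≤ ∫ x in Iic (-t), -x * pdf01 x := h2
    _ = pdf01 (-t) := integral_neg_mul_pdf01 _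
    _ = pdf01 t := pdf01_even t

lemma g_anti : AntitoneOn (fun x : ℝ => rexp (x^2/2) * stdNormalCDF (-x)) (Ici 0) := by
  have hderiv : ∀ x : ℝ, HasDerivAt (fun x : ℝ => rexp (x^2/2) * stdNormalCDF (-x))
      (rexp (x^2/2) * (x * stdNormalCDF (-x) - pdf01 x)) x := by
    intro x
    have h1 : HasDerivAt (fun x : ℝ => rexp (x^2/2)) (x * rexp (x^2/2)) x := by
      have hu : HasDerivAt (fun x : ℝ => x ^ 2 / 2) x x := by
        have := (hasDerivAt_pow 2 x).div_const 2
        simpa using this.congr_deriv (by ring)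
      simpa [mul_comm, Function.comp_def] using (Real.hasDerivAt_exp _).comp x hu
    have h2 : HasDerivAt (fun x : ℝ => stdNormalCDF (-x)) (-pdf01 x) x := by
      have := (hasDerivAt_stdNormalCDF (-x)).comp x (hasDerivAt_neg x)
      simpa [pdf01_even, Function.comp_def] using this
    have := h1.mul h2
    refine this.congr_deriv ?_
    ring
  refine antitoneOn_of_deriv_nonpos (convex_Ici 0) ?_ ?_ ?_
  · exact Continuous.continuousOn (by
      have : ∀ x : ℝ, HasDerivAt _ _ x := hderiv
      exact continuous_iff_continuousAt.2 fun x => (hderiv x).continuousAt)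
  · exact fun x _ => (hderiv x).differentiableAt.differentiableWithinAt
  · intro x hx
    rw [interior_Ici] at hx
    rw [(hderiv x).deriv]
    have hm := mills x (le_of_lt hx)
    have : x * stdNormalCDF (-x) - pdf01 x ≤ 0 := by linarith
    exact mul_nonpos_of_nonneg_of_nonpos (le_of_lt (Real.exp_pos _)) this

lemma cdf_neg_le {b t : ℝ} (hb : 0 ≤ b) (hbt : b ≤ t) :
    stdNormalCDF (-t) ≤ rexp ((b^2 - t^2)/2) * stdNormalCDF (-b) := by
  have h := g_anti (mem_Ici.2 hb) (mem_Ici.2 (hb.trans hbt)) hbt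
  have h2 := mul_le_mul_of_nonneg_left h (le_of_lt (Real.exp_pos (-(t^2)/2)))
  calc stdNormalCDF (-t) = rexp (-(t^2)/2) * (rexp (t^2/2) * stdNormalCDF (-t)) := by
        rw [← mul_assoc, ← Real.exp_add, neg_div, neg_add_cancel, Real.exp_zero, one_mul]
    _ ≤ rexp (-(t^2)/2) * (rexp (b^2/2) * stdNormalCDF (-b)) := h2
    _ = rexp ((b^2 - t^2)/2) * stdNormalCDF (-b) := by
        rw [← mul_assoc, ← Real.exp_add]; ring_nf
lemma gauss_Iio (x : ℝ) : gaussianReal 0 1 (Iio x) = gaussianReal 0 1 (Iic x) := by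
  have : Iio x = Iic x \ {x} := by
    ext u; simp [lt_iff_le_and_ne]
  rw [this, measure_diff_null (gauss_singleton x)]

lemma gauss_Icc (x y : ℝ) (h : x ≤ y) :
    ((gaussianReal 0 1) (Icc x y)).toReal = stdNormalCDF y - stdNormalCDF x := by
  have hset : Icc x y = Iic y \ Iio x := by
    ext u; simp only [mem_Icc, mem_diff, mem_Iic, mem_Iio, not_lt]; tauto
  have hdiff : gaussianReal 0 1 (Iic y \ Iio x) =
      gaussianReal 0 1 (Iic y) - gaussianReal 0 1 (Iio x) :=
    measure_diff (fun u hu => le_trans (le_of_lt hu) h)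
      measurableSet_Iio.nullMeasurableSet (measure_ne_top _ _)
  rw [hset, hdiff, ENNReal.toReal_sub_of_le
      (by rw [gauss_Iio]; exact measure_mono (Iic_subset_Iic.2 h)) (measure_ne_top _ _),
    gauss_Iio]
  rfl

lemma key1d (a s : ℝ) (hs : 0 ≤ s) :
    (1 - rexp (-s/2)) * stdNormalCDF a ≤
      ((gaussianReal 0 1) {u : ℝ | u ≤ a ∧ u^2 ≤ (min a 0)^2 + s}).toReal := by
  set t := Real.sqrt ((min a 0)^2 + s) with hts
  have ht0 : 0 ≤ t := Real.sqrt_nonneg _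
  have ht2 : t^2 = (min a 0)^2 + s := Real.sq_sqrt (by positivity)
  have hset : {u : ℝ | u ≤ a ∧ u^2 ≤ (min a 0)^2 + s} = Icc (-t) (min a t) := by
    ext u
    simp only [mem_setOf_eq, mem_Icc, le_min_iff]
    constructor
    · rintro ⟨h1, h2⟩
      rw [← ht2] at h2
      constructor
      · nlinarith
      · exact ⟨h1, by nlinarith⟩
    · rintro ⟨h1, h2, h3⟩
      rw [← ht2]
      exact ⟨h2, by nlinarith⟩
  have hta : -t ≤ a := by
    rcases le_or_gt a 0 with ha | ha
    · rw [min_eq_left ha] at ht2; nlinarith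
    · linarith
  rw [hset]
  rcases le_or_gt a 0 with ha | ha
  · rw [min_eq_left (ha.trans ht0), gauss_Icc _ _ hta]
    have hb : (0:ℝ) ≤ -a := by linarith
    have hbt : -a ≤ t := by linarith
    have hkey := cdf_neg_le hb hbt
    rw [neg_neg] at hkey
    have hexp : ((-a)^2 - t^2)/2 = -s/2 := by
      rw [ht2, min_eq_left ha]; ring
    rw [hexp] at hkey
    nlinarith [stdNormalCDF_pos a]
  · rw [min_eq_right ha.le] at ht2
    have h0t := cdf_neg_le (le_refl 0) ht0
    rw [neg_zero, stdNormalCDF_zero] at h0t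
    have hexp : ((0:ℝ)^2 - t^2)/2 = -s/2 := by rw [ht2]; ring
    rw [hexp] at h0t
    have he1 : rexp (-s/2) ≤ 1 := Real.exp_le_one_iff.2 (by linarith)
    have hNa1 := stdNormalCDF_le_one a
    have hNahalf : (1:ℝ)/2 ≤ stdNormalCDF a := by
      rw [← stdNormalCDF_zero]; exact stdNormalCDF_mono ha.le
    rcases le_or_gt t a with hcase | hcase
    · rw [min_eq_right hcase, gauss_Icc _ _ (by linarith)]
      have hNt : stdNormalCDF t = 1 - stdNormalCDF (-t) := by
        have := stdNormalCDF_neg t; linarith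
      rw [hNt]
      nlinarith
    · rw [min_eq_left hcase.le, gauss_Icc _ _ hta]
      nlinarith [Real.exp_pos (-s/2)]

noncomputable def cinv : ℝ := (Real.sqrt 2)⁻¹

lemma cinv_sq : cinv^2 = 1/2 := by
  rw [cinv, inv_pow, Real.sq_sqrt (by norm_num : (0:ℝ) ≤ 2)]; norm_num

lemma cinv_pos : 0 < cinv := by
  rw [cinv]; positivity

noncomputable def Rlin : (ℝ × ℝ) →ₗ[ℝ] ℝ × ℝ :=
  (cinv • (LinearMap.fst ℝ ℝ ℝ - LinearMap.snd ℝ ℝ ℝ)).prod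
    (cinv • (LinearMap.fst ℝ ℝ ℝ + LinearMap.snd ℝ ℝ ℝ))

lemma Rlin_apply (p : ℝ × ℝ) : Rlin p = (cinv * (p.1 - p.2), cinv * (p.1 + p.2)) := by
  simp [Rlin, smul_eq_mul]; ring

lemma Rlin_det : LinearMap.det Rlin = 1 := by
  have hM : LinearMap.toMatrix (Module.Basis.finTwoProd ℝ) (Module.Basis.finTwoProd ℝ) Rlin
      = !![cinv, -cinv; cinv, cinv] := by
    ext i j
    fin_cases i <;> fin_cases j <;>
      simp [LinearMap.toMatrix_apply, Module.Basis.coe_finTwoProd_repr, Rlin_apply,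
        Module.Basis.finTwoProd_zero, Module.Basis.finTwoProd_one]
  have := LinearMap.det_toMatrix (Module.Basis.finTwoProd ℝ) Rlin
  rw [hM, Matrix.det_fin_two_of] at this
  rw [← this]
  have := cinv_sq
  nlinarith

lemma Rlin_continuous : Continuous Rlin := Rlin.continuous_of_finiteDimensional

lemma Rlin_mp_vol : MeasurePreserving Rlin (volume : Measure (ℝ × ℝ)) volume := by
  refine ⟨Rlin_continuous.measurable, ?_⟩
  rw [Measure.map_linearMap_addHaar_eq_smul_addHaar volume (by rw [Rlin_det]; norm_num),
    Rlin_det]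
  simp

noncomputable def pdf2 : ℝ × ℝ → ℝ≥0∞ := fun p => gaussianPDF 0 1 p.1 * gaussianPDF 0 1 p.2

lemma pdf2_measurable : Measurable pdf2 :=
  ((measurable_gaussianPDF 0 1).comp measurable_fst).mul
    ((measurable_gaussianPDF 0 1).comp measurable_snd)

lemma gauss_prod_eq :
    (gaussianReal 0 1).prod (gaussianReal 0 1)
      = (volume : Measure (ℝ × ℝ)).withDensity pdf2 := by
  refine Measure.prod_eq fun s t hs ht => ?_
  rw [withDensity_apply _ (hs.prod ht), Measure.volume_eq_prod, ← Measure.prod_restrict]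
  unfold pdf2
  rw [MeasureTheory.lintegral_prod_mul (measurable_gaussianPDF 0 1).aemeasurable
      (measurable_gaussianPDF 0 1).aemeasurable,
    ← gaussianReal_apply 0 one_ne_zero s, ← gaussianReal_apply 0 one_ne_zero t]

lemma pdf01_mul (u v : ℝ) :
    gaussianPDFReal 0 1 u * gaussianPDFReal 0 1 v
      = (Real.sqrt (2 * π))⁻¹ * (Real.sqrt (2 * π))⁻¹ * rexp (-(u^2 + v^2) / 2) := by
  simp only [gaussianPDFReal]
  push_cast
  rw [mul_one, mul_one, mul_assoc, mul_comm (rexp _), mul_assoc, ← Real.exp_add, ← mul_assoc]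
  congr 1
  ring

lemma pdf2_comp_R (p : ℝ × ℝ) : pdf2 (Rlin p) = pdf2 p := by
  obtain ⟨x, y⟩ := p
  simp only [pdf2, Rlin_apply, gaussianPDF]
  rw [← ENNReal.ofReal_mul (gaussianPDFReal_nonneg 0 1 _),
    ← ENNReal.ofReal_mul (gaussianPDFReal_nonneg 0 1 _)]
  congr 1
  rw [pdf01_mul, pdf01_mul]
  congr 2
  have h := cinv_sq
  nlinarith [h]

lemma Rmp_gauss :
    MeasurePreserving Rlin ((gaussianReal 0 1).prod (gaussianReal 0 1))
      ((gaussianReal 0 1).prod (gaussianReal 0 1)) := by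
  refine ⟨Rlin_continuous.measurable, ?_⟩
  ext A hA
  rw [Measure.map_apply Rlin_continuous.measurable hA, gauss_prod_eq,
    withDensity_apply _ (hA.preimage Rlin_continuous.measurable), withDensity_apply _ hA]
  conv_rhs => rw [← Rlin_mp_vol.map_eq]
  rw [setLIntegral_map hA pdf2_measurable Rlin_continuous.measurable]
  exact setLIntegral_congr_fun (hA.preimage Rlin_continuous.measurable)
    (fun x _ => (pdf2_comp_R x).symm)
section Assembly

variable (θ r : ℝ)

/-- The rotated-and-shifted coordinates map. -/
noncomputable def Tmap (θ : ℝ) : ℝ × ℝ → ℝ × ℝ :=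
  fun p => (cinv * (p.1 - p.2 + θ), cinv * (p.1 + p.2 - θ))

lemma Tmap_eq (θ : ℝ) : Tmap θ = Rlin ∘ (fun p : ℝ × ℝ => (p.1, p.2 - θ)) := by
  funext p
  simp only [Tmap, Function.comp_apply, Rlin_apply]
  simp only [Prod.mk.injEq]
  constructor <;> ring

lemma Tmap_mp (θ : ℝ) : MeasurePreserving (Tmap θ) (Qmeas 0 θ)
    ((gaussianReal 0 1).prod (gaussianReal 0 1)) := by
  rw [Tmap_eq]
  refine Rmp_gauss.comp ?_
  have h2 : MeasurePreserving (fun y : ℝ => y + -θ) (gaussianReal θ 1) (gaussianReal 0 1) :=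
    ⟨by fun_prop, by rw [gaussianReal_map_add_const (-θ)]; norm_num⟩
  have h1 : MeasurePreserving (id : ℝ → ℝ) (gaussianReal 0 1) (gaussianReal 0 1) :=
    MeasurePreserving.id _
  have hSfun : (fun p : ℝ × ℝ => (p.1, p.2 - θ)) = Prod.map (id : ℝ → ℝ) (fun y => y + -θ) := by
    funext p
    simp [Prod.map, sub_eq_add_neg]
  rw [hSfun]
  exact h1.prod h2

end Assembly



noncomputable def aval (θ : ℝ) : ℝ := cinv * θ

/-- Rotated version of `BstarSet`. -/
def Bprime (θ r : ℝ) : Set (ℝ × ℝ) :=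
  {p : ℝ × ℝ | p.1 ≤ aval θ ∧ p.1 ^ 2 + p.2 ^ 2 ≤ (min θ 0) ^ 2 / 2 + r ^ 2}

lemma min_aval_sq (θ : ℝ) : (min (aval θ) 0) ^ 2 = (min θ 0) ^ 2 / 2 := by
  rcases le_total θ 0 with h | h
  · have ha : aval θ ≤ 0 := mul_nonpos_of_nonneg_of_nonpos cinv_pos.le h
    rw [min_eq_left ha, min_eq_left h, aval]
    have := cinv_sq
    nlinarith
  · have ha : 0 ≤ aval θ := mul_nonneg cinv_pos.le h
    rw [min_eq_right ha, min_eq_right h]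
    norm_num

lemma preimage_halfplane (θ : ℝ) :
    Tmap θ ⁻¹' {p : ℝ × ℝ | p.1 ≤ aval θ} = halfPlaneU := by
  ext p
  simp only [mem_preimage, Tmap, mem_setOf_eq, halfPlaneU, aval]
  rw [mul_le_mul_iff_right₀ cinv_pos]
  constructor <;> intro h <;> linarith

lemma preimage_Bprime (θ r : ℝ) :
    Tmap θ ⁻¹' Bprime θ r = BstarSet θ r := by
  ext ⟨x, y⟩
  simp only [mem_preimage, Tmap, Bprime, mem_setOf_eq, BstarSet, halfPlaneU, aval]
  have hsq : (cinv * (x - y + θ)) ^ 2 + (cinv * (x + y - θ)) ^ 2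
      = x ^ 2 + (y - θ) ^ 2 := by
    linear_combination ((x - y + θ) ^ 2 + (x + y - θ) ^ 2) * cinv_sq
  rw [hsq, mul_le_mul_iff_right₀ cinv_pos]
  constructor <;> rintro ⟨h1, h2⟩ <;> exact ⟨by linarith, h2⟩

lemma measurable_Bprime (θ r : ℝ) : MeasurableSet (Bprime θ r) := by
  refine MeasurableSet.inter ?_ ?_
  · exact measurableSet_le measurable_fst measurable_const
  · exact measurableSet_le ((measurable_fst.pow_const 2).add (measurable_snd.pow_const 2)) measurable_const

lemma QU_eq (θ : ℝ) :
    Qmeas 0 θ halfPlaneU = ENNReal.ofReal (stdNormalCDF (aval θ)) := by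
  rw [← preimage_halfplane θ,
    (Tmap_mp θ).measure_preimage
      ((measurableSet_le measurable_fst measurable_const).nullMeasurableSet)]
  have : {p : ℝ × ℝ | p.1 ≤ aval θ} = (Iic (aval θ)) ×ˢ (univ : Set ℝ) := by
    ext p; simp [mem_prod]
  rw [this, Measure.prod_prod, gauss_Iic, measure_univ, mul_one]

lemma QB_eq (θ r : ℝ) :
    Qmeas 0 θ (BstarSet θ r)
      = ((gaussianReal 0 1).prod (gaussianReal 0 1)) (Bprime θ r) := by
  rw [← preimage_Bprime θ r,
    (Tmap_mp θ).measure_preimage (measurable_Bprime θ r).nullMeasurableSet]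






variable (θ : ℝ) {r : ℝ}

noncomputable def lb (θ r : ℝ) : ℝ → ℝ :=
  Set.indicator (Icc (-r) r)
    (fun v => (1 - rexp (-(r^2 - v^2)/2)) * stdNormalCDF (aval θ))

lemma slice_lower (θ r v : ℝ) :
    ENNReal.ofReal (lb θ r v)
      ≤ gaussianReal 0 1 {u : ℝ | u ≤ aval θ ∧ u^2 + v^2 ≤ (min θ 0)^2/2 + r^2} := by
  by_cases hv : v ∈ Icc (-r) r
  · have hv2 : v^2 ≤ r^2 := by
      obtain ⟨h1, h2⟩ := hv; nlinarith
    have hset : {u : ℝ | u ≤ aval θ ∧ u^2 + v^2 ≤ (min θ 0)^2/2 + r^2}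
        = {u : ℝ | u ≤ aval θ ∧ u^2 ≤ (min (aval θ) 0)^2 + (r^2 - v^2)} := by
      ext u
      rw [mem_setOf_eq, mem_setOf_eq, min_aval_sq]
      constructor <;> rintro ⟨h1, h2⟩ <;> exact ⟨h1, by linarith⟩
    rw [hset, lb, indicator_of_mem hv]
    exact ENNReal.ofReal_le_of_le_toReal (key1d (aval θ) (r^2 - v^2) (by linarith))
  · rw [lb, indicator_of_notMem hv]
    simp

lemma lb_nonneg (θ r : ℝ) : ∀ v, 0 ≤ lb θ r v := by
  intro v
  refine indicator_nonneg (fun u hu => ?_) v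
  obtain ⟨h1, h2⟩ := hu
  have : rexp (-(r^2 - u^2)/2) ≤ 1 := Real.exp_le_one_iff.2 (by nlinarith)
  have := (stdNormalCDF_pos (aval θ)).le
  nlinarith

lemma lb_integrable (θ r : ℝ) : Integrable (lb θ r) (gaussianReal 0 1) := by
  rw [lb, integrable_indicator_iff measurableSet_Icc]
  refine ContinuousOn.integrableOn_compact isCompact_Icc ?_
  fun_prop

lemma prodB_ge (θ r : ℝ) :
    ENNReal.ofReal (∫ v, lb θ r v ∂(gaussianReal 0 1))
      ≤ ((gaussianReal 0 1).prod (gaussianReal 0 1)) (Bprime θ r) := by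
  rw [Measure.prod_apply_symm (measurable_Bprime θ r),
    ofReal_integral_eq_lintegral_ofReal (lb_integrable θ r) (ae_of_all _ (lb_nonneg θ r))]
  exact lintegral_mono fun v => slice_lower θ r v

lemma sqrt_two_pi_eq : Real.sqrt (2*π) = 2 * Real.sqrt (π/2) := by
  rw [show (2*π : ℝ) = 2^2 * (π/2) by ring, Real.sqrt_mul (by norm_num), Real.sqrt_sq (by norm_num)]

lemma chiSq3_eq (hr : 0 < r) :
    chiSq3CDF (r^2) = 2 * stdNormalCDF r - 1 - (Real.sqrt (2*π))⁻¹ * rexp (-r^2/2) * (2*r) := by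
  rw [chiSq3CDF, if_pos (by positivity : (0:ℝ) < r^2), Real.sqrt_sq hr.le]
  have hpos : (0:ℝ) < Real.sqrt (π/2) := Real.sqrt_pos.2 (by positivity)
  rw [sqrt_two_pi_eq]
  field_simp

lemma exp_const (r v : ℝ) :
    gaussianPDFReal 0 1 v * rexp (-(r^2 - v^2)/2) = (Real.sqrt (2*π))⁻¹ * rexp (-r^2/2) := by
  simp only [gaussianPDFReal]
  push_cast
  rw [mul_one, mul_one, mul_assoc, ← Real.exp_add]
  congr 1
  ring






lemma integral_lb (θ : ℝ) {r : ℝ} (hr : 0 < r) :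
    ∫ v, lb θ r v ∂(gaussianReal 0 1)
      = stdNormalCDF (aval θ) * chiSq3CDF (r^2) := by
  rw [lb, integral_indicator measurableSet_Icc, integral_mul_const]
  have hIc : IntegrableOn (fun v => rexp (-(r^2-v^2)/2)) (Icc (-r) r) (gaussianReal 0 1) :=
    ContinuousOn.integrableOn_compact isCompact_Icc (Continuous.continuousOn (by fun_prop))
  have h1 : IntegrableOn (fun _ : ℝ => (1:ℝ)) (Icc (-r) r) (gaussianReal 0 1) :=
    integrableOn_const
  rw [integral_sub h1 hIc, setIntegral_const, measureReal_def]
  have hIcc : ((gaussianReal 0 1) (Icc (-r) r)).toReal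
      = stdNormalCDF r - (1 - stdNormalCDF r) := by
    rw [gauss_Icc (-r) r (by linarith), stdNormalCDF_neg]
  have hE : ∫ v in Icc (-r) r, rexp (-(r^2-v^2)/2) ∂(gaussianReal 0 1)
      = (Real.sqrt (2*π))⁻¹ * rexp (-r^2/2) * (2*r) := by
    rw [gaussianReal_of_var_ne_zero 0 one_ne_zero]
    have hco : volume.withDensity (gaussianPDF 0 1)
        = volume.withDensity (fun x => ((gaussianPDFReal 0 1 x).toNNReal : ℝ≥0∞)) := rfl
    rw [hco, setIntegral_withDensity_eq_setIntegral_smul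
      ((measurable_gaussianPDFReal 0 1).real_toNNReal) _ measurableSet_Icc]
    rw [setIntegral_congr_fun measurableSet_Icc (g := fun _ => (Real.sqrt (2*π))⁻¹ * rexp (-r^2/2))
      (fun v _ => by
        rw [NNReal.smul_def, smul_eq_mul,
          Real.coe_toNNReal _ (gaussianPDFReal_nonneg 0 1 v), exp_const r v]),
      setIntegral_const, measureReal_def, Real.volume_Icc, sub_neg_eq_add,
      ENNReal.toReal_ofReal (by positivity), smul_eq_mul]
    ring
  rw [hE, hIcc, chiSq3_eq hr]
  simp only [smul_eq_mul]
  ring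


end BstarAux

open BstarAux in
/-- Lemma 4: `P_{0,θ}(B*_{θ,r}) ≥ F_{χ²₃}(r²)` for every `θ ∈ ℝ` and `r > 0`. -/
theorem prob_BstarSet_ge_chiSq3 (θ : ℝ) (r : ℝ) (hr : 0 < r) :
    (Pmeas 0 θ (BstarSet θ r)).toReal ≥ chiSq3CDF (r ^ 2) := by

  have hUmeas : MeasurableSet halfPlaneU := measurableSet_le measurable_fst measurable_snd
  have hNa := stdNormalCDF_pos (aval θ)
  have hnn : 0 ≤ stdNormalCDF (aval θ) * chiSq3CDF (r^2) := by
    rw [← integral_lb θ hr]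
    exact integral_nonneg (lb_nonneg θ r)
  have hge := prodB_ge θ r
  rw [integral_lb θ hr] at hge
  have hQBreal : stdNormalCDF (aval θ) * chiSq3CDF (r^2)
      ≤ (Qmeas 0 θ (BstarSet θ r)).toReal := by
    rw [QB_eq θ r]
    have := ENNReal.toReal_mono (measure_ne_top _ _) hge
    rwa [ENNReal.toReal_ofReal hnn] at this
  have hPeq : Pmeas 0 θ (BstarSet θ r)
      = (Qmeas 0 θ halfPlaneU)⁻¹ * Qmeas 0 θ (halfPlaneU ∩ BstarSet θ r) :=
    cond_apply hUmeas (Qmeas 0 θ) (BstarSet θ r)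
  rw [ge_iff_le, hPeq, inter_eq_self_of_subset_right (fun p hp => hp.1),
    ENNReal.toReal_mul, ENNReal.toReal_inv, QU_eq θ, ENNReal.toReal_ofReal hNa.le]
  calc chiSq3CDF (r^2)
      = (stdNormalCDF (aval θ))⁻¹ * (stdNormalCDF (aval θ) * chiSq3CDF (r^2)) := by
        field_simp
    _ ≤ (stdNormalCDF (aval θ))⁻¹ * (Qmeas 0 θ (BstarSet θ r)).toReal :=
        mul_le_mul_of_nonneg_left hQBreal (inv_nonneg.2 hNa.le)
end

section
/- Fix 0 < α < 1 and for w ∈ ℝ let z(w) > 0 be defined by Φ(−w − z(w)) = α Φ(−w). Then there exists Δ > 1 such that for every θ ∈ ℝ and every x ≥ θ + Δ, the integral ∫_{−∞}^{θ} [Φ(x + z(x − θ₀)) − Φ(x)] / (1 − Φ(x)) dθ₀ diverges to +∞. (Here the integrand is, for each θ₀ < θ, the probability under a standard normal distribution truncated to (x,∞) of the interval (x, x + z(x − θ₀)].) -/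
open MeasureTheory ProbabilityTheory Real Set

lemma P_eq (t : ℝ) : gaussianPDFReal 0 1 t = (√(2*π))⁻¹ * rexp (-t^2/2) := by
  simp [gaussianPDFReal]

lemma P_le {s t : ℝ} (h : s^2 ≤ t^2) : gaussianPDFReal 0 1 t ≤ gaussianPDFReal 0 1 s := by
  rw [P_eq, P_eq]
  exact mul_le_mul_of_nonneg_left (exp_le_exp.2 (by linarith)) (by positivity)

lemma my_cdf_diff {a b : ℝ} (hab : a ≤ b) :
    stdNormalCDF b - stdNormalCDF a = ∫ t in Set.Ioc a b, gaussianPDFReal 0 1 t := by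
  have hu : Set.Iic a ∪ Set.Ioc a b = Set.Iic b := Set.Iic_union_Ioc_eq_Iic hab
  have hm : gaussianReal 0 1 (Set.Iic b)
      = gaussianReal 0 1 (Set.Iic a) + gaussianReal 0 1 (Set.Ioc a b) := by
    rw [← hu, measure_union (Set.Iic_disjoint_Ioc le_rfl) measurableSet_Ioc]
  have h1 : stdNormalCDF b = stdNormalCDF a + ((gaussianReal 0 1) (Set.Ioc a b)).toReal := by
    rw [stdNormalCDF, stdNormalCDF, hm,
      ENNReal.toReal_add (measure_ne_top _ _) (measure_ne_top _ _)]
  rw [h1, gaussianReal_apply_eq_integral 0 one_ne_zero, ENNReal.toReal_ofReal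
    (setIntegral_nonneg measurableSet_Ioc fun t _ => gaussianPDFReal_nonneg 0 1 t)]
  ring

lemma my_cdf_diff_ge {a b m : ℝ} (hab : a ≤ b)
    (hm : ∀ t ∈ Set.Ioc a b, m ≤ gaussianPDFReal 0 1 t) :
    m * (b - a) ≤ stdNormalCDF b - stdNormalCDF a := by
  rw [my_cdf_diff hab]
  have := setIntegral_ge_of_const_le (μ := volume) (c := m) measurableSet_Ioc
    (by simp) hm ((integrable_gaussianPDFReal 0 1).integrableOn)
  rwa [Real.volume_real_Ioc_of_le hab, smul_eq_mul, mul_comm] at this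

lemma my_cdf_diff_le {a b M : ℝ} (hab : a ≤ b)
    (hM : ∀ t ∈ Set.Ioc a b, gaussianPDFReal 0 1 t ≤ M) :
    stdNormalCDF b - stdNormalCDF a ≤ (b - a) * M := by
  rw [my_cdf_diff hab]
  calc ∫ t in Set.Ioc a b, gaussianPDFReal 0 1 t ≤ ∫ _t in Set.Ioc a b, M :=
        setIntegral_mono_on ((integrable_gaussianPDFReal 0 1).integrableOn)
          (integrableOn_const (by simp)) measurableSet_Ioc hM
    _ = (b - a) * M := by
        rw [setIntegral_const, Real.volume_real_Ioc_of_le hab,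
          smul_eq_mul]

lemma my_cdf_mono {a b : ℝ} (hab : a ≤ b) : stdNormalCDF a ≤ stdNormalCDF b :=
  ENNReal.toReal_mono (measure_ne_top _ _) (measure_mono (Set.Iic_subset_Iic.2 hab))

lemma my_cdf_le_one (a : ℝ) : stdNormalCDF a ≤ 1 := by
  have := prob_le_one (μ := gaussianReal 0 1) (s := Set.Iic a)
  simpa [stdNormalCDF] using ENNReal.toReal_mono (by simp) this

lemma my_cdf_lt_one (a : ℝ) : stdNormalCDF a < 1 := by
  have hm : ∀ t ∈ Set.Ioc a (a+1), gaussianPDFReal 0 1 (|a|+1) ≤ gaussianPDFReal 0 1 t := by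
    intro t ht
    refine P_le (sq_le_sq' ?_ ?_)
    · nlinarith [abs_nonneg a, neg_abs_le a, ht.1]
    · nlinarith [le_abs_self a, ht.2]
  have h := my_cdf_diff_ge (by linarith) hm
  have hp : 0 < gaussianPDFReal 0 1 (|a|+1) := gaussianPDFReal_pos _ _ _ one_ne_zero
  have := my_cdf_le_one (a+1)
  nlinarith

lemma lint_inv_top {a c : ℝ} (ha : 0 < a) (hc : 0 < c) :
    ∫⁻ u in Set.Ioi a, ENNReal.ofReal (c * u⁻¹) = ⊤ := by
  by_contra h
  have hmeas : AEStronglyMeasurable (fun u : ℝ => c * u⁻¹) (volume.restrict (Set.Ioi a)) :=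
    (measurable_const.mul measurable_inv).aestronglyMeasurable
  have hnn : 0 ≤ᵐ[volume.restrict (Set.Ioi a)] fun u : ℝ => c * u⁻¹ :=
    (ae_restrict_iff' measurableSet_Ioi).2 (ae_of_all _ fun u hu =>
      mul_nonneg hc.le (inv_nonneg.2 (ha.trans hu).le))
  have hint : Integrable (fun u : ℝ => c * u⁻¹) (volume.restrict (Set.Ioi a)) :=
    (lintegral_ofReal_ne_top_iff_integrable hmeas hnn).1 h
  have h2 : IntegrableOn (fun u : ℝ => u⁻¹) (Set.Ioi a) := by
    have h3 := hint.const_mul c⁻¹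
    have he : (fun u : ℝ => c⁻¹ * (c * u⁻¹)) = fun u : ℝ => u⁻¹ := by
      funext u; field_simp
    rwa [he] at h3
  have h3 : IntegrableOn (fun u : ℝ => u ^ (-1 : ℝ)) (Set.Ioi a) :=
    h2.congr_fun (fun u _ => (Real.rpow_neg_one u).symm) measurableSet_Ioi
  rw [integrableOn_Ioi_rpow_iff ha] at h3
  linarith

lemma lint_Iio_top {θ x c : ℝ} (hc : 0 < c) (hxθ : 0 < x - θ) :
    ∫⁻ θ₀ in Set.Iio θ, ENNReal.ofReal (c * (x - θ₀)⁻¹) = ⊤ := by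
  have hmp : MeasurePreserving (fun t : ℝ => x - t) volume volume := by
    have := (measurePreserving_add_left (volume : Measure ℝ) x).comp
      (Measure.measurePreserving_neg (volume : Measure ℝ))
    simpa [Function.comp_def, sub_eq_add_neg] using this
  have hemb : MeasurableEmbedding (fun t : ℝ => x - t) :=
    (MeasurableEquiv.subLeft x).measurableEmbedding
  have h := hmp.setLIntegral_comp_emb hemb (fun u => ENNReal.ofReal (c * u⁻¹)) (Set.Iio θ)
  rw [Set.image_const_sub_Iio] at h
  rw [h]
  exact lint_inv_top hxθ hc

/-- There exists `Δ > 1` such that for every `θ` and every `x ≥ θ + Δ`, the integral over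
`θ₀ < θ` of the truncated-normal probability of the interval `(x, x + z(x − θ₀)]`
diverges, where `z(w) > 0` is defined by `Φ(−w − z(w)) = α Φ(−w)`. -/
theorem integral_truncated_acceptance_prob_diverges
    (α : ℝ) (hα : 0 < α) (hα1 : α < 1)
    (z : ℝ → ℝ) (hzpos : ∀ w : ℝ, 0 < z w)
    (hz : ∀ w : ℝ, stdNormalCDF (-w - z w) = α * stdNormalCDF (-w)) :
    ∃ Δ : ℝ, 1 < Δ ∧ ∀ θ : ℝ, ∀ x : ℝ, θ + Δ ≤ x →
      ∫⁻ θ₀ in Set.Iio θ,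
        ENNReal.ofReal
          ((stdNormalCDF (x + z (x - θ₀)) - stdNormalCDF x) / (1 - stdNormalCDF x)) = ⊤ := by
  refine ⟨2, one_lt_two, fun θ x hx => ?_⟩
  have hpx : 0 < gaussianPDFReal 0 1 (|x| + 1) := gaussianPDFReal_pos _ _ _ one_ne_zero
  set c : ℝ := (1 - α) * rexp (-(3/2)) * gaussianPDFReal 0 1 (|x| + 1) with hcdef
  have hc : 0 < c := mul_pos (mul_pos (by linarith) (exp_pos _)) hpx
  have key : ∀ θ₀ ∈ Set.Iio θ, ENNReal.ofReal (c * (x - θ₀)⁻¹) ≤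
      ENNReal.ofReal
        ((stdNormalCDF (x + z (x - θ₀)) - stdNormalCDF x) / (1 - stdNormalCDF x)) := by
    intro θ₀ hθ₀
    rw [Set.mem_Iio] at hθ₀
    set w : ℝ := x - θ₀ with hwdef
    have hwgt : 2 < w := by simp only [hwdef]; linarith
    have hwpos : 0 < w := by linarith
    have hu0 : 0 < w⁻¹ := inv_pos.2 hwpos
    have hu2 : w⁻¹ < 1/2 := by
      rw [inv_lt_comm₀ hwpos (by norm_num)]
      norm_num; linarith
    have hww : w * w⁻¹ = 1 := mul_inv_cancel₀ hwpos.ne'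
    have hpw : 0 < gaussianPDFReal 0 1 w := gaussianPDFReal_pos _ _ _ one_ne_zero
    -- Step A
    have hA : (1 - α) * stdNormalCDF (-w) ≤ z w * gaussianPDFReal 0 1 w := by
      have hle : -w - z w ≤ -w := by linarith [hzpos w]
      have hM : ∀ t ∈ Set.Ioc (-w - z w) (-w),
          gaussianPDFReal 0 1 t ≤ gaussianPDFReal 0 1 w :=
        fun t ht => P_le (by nlinarith [ht.2])
      have h1 := my_cdf_diff_le hle hM
      rw [hz w] at h1
      have harg : (-w - (-w - z w)) = z w := by ring
      rw [harg] at h1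
      have he : (1 - α) * stdNormalCDF (-w) = stdNormalCDF (-w) - α * stdNormalCDF (-w) := by
        ring
      rw [he]; exact h1
    -- Step B
    have hB : rexp (-(3/2)) * gaussianPDFReal 0 1 w * w⁻¹ ≤ stdNormalCDF (-w) := by
      have hle : -w - w⁻¹ ≤ -w := by linarith
      have hm : ∀ t ∈ Set.Ioc (-w - w⁻¹) (-w),
          rexp (-(3/2)) * gaussianPDFReal 0 1 w ≤ gaussianPDFReal 0 1 t := by
        intro t ht
        have h1 : gaussianPDFReal 0 1 (w + w⁻¹) ≤ gaussianPDFReal 0 1 t :=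
          P_le (by nlinarith [ht.1, ht.2])
        refine le_trans ?_ h1
        rw [P_eq, P_eq]
        have he : rexp (-(3/2)) * ((√(2*π))⁻¹ * rexp (-w^2/2))
            = (√(2*π))⁻¹ * rexp (-(3/2) + -w^2/2) := by
          rw [Real.exp_add]; ring
        rw [he]
        refine mul_le_mul_of_nonneg_left (exp_le_exp.2 ?_) (by positivity)
        nlinarith [sq_nonneg (w⁻¹), hu2, hu0]
      have h1 := my_cdf_diff_ge hle hm
      have harg : (-w - (-w - w⁻¹)) = w⁻¹ := by ring
      rw [harg] at h1
      have h0 : (0:ℝ) ≤ stdNormalCDF (-w - w⁻¹) := ENNReal.toReal_nonneg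
      linarith
    -- Step C
    have hzlb : (1 - α) * rexp (-(3/2)) * w⁻¹ ≤ z w := by
      have h1 : (1 - α) * (rexp (-(3/2)) * gaussianPDFReal 0 1 w * w⁻¹)
          ≤ (1 - α) * stdNormalCDF (-w) :=
        mul_le_mul_of_nonneg_left hB (by linarith)
      have h2 := h1.trans hA
      have he : (1 - α) * (rexp (-(3/2)) * gaussianPDFReal 0 1 w * w⁻¹)
          = ((1 - α) * rexp (-(3/2)) * w⁻¹) * gaussianPDFReal 0 1 w := by ring
      rw [he] at h2
      exact le_of_mul_le_mul_right h2 hpw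
    set s : ℝ := (1 - α) * rexp (-(3/2)) * w⁻¹ with hsdef
    have hs0 : 0 < s := mul_pos (mul_pos (by linarith) (exp_pos _)) hu0
    have hs1 : s ≤ 1 := by
      have h1 : rexp (-(3/2)) ≤ 1 := exp_le_one_iff.2 (by norm_num)
      have h2 : (1 - α) * rexp (-(3/2)) ≤ 1 :=
        mul_le_one₀ (by linarith) (exp_pos _).le h1
      nlinarith
    -- Step E
    have hE : s * gaussianPDFReal 0 1 (|x| + 1)
        ≤ stdNormalCDF (x + z w) - stdNormalCDF x := by
      have hm : ∀ t ∈ Set.Ioc x (x + s),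
          gaussianPDFReal 0 1 (|x| + 1) ≤ gaussianPDFReal 0 1 t := by
        intro t ht
        refine P_le (sq_le_sq' ?_ ?_)
        · nlinarith [neg_abs_le x, ht.1]
        · nlinarith [le_abs_self x, ht.2]
      have h1 := my_cdf_diff_ge (by linarith : x ≤ x + s) hm
      have harg : (x + s - x) = s := by ring
      rw [harg] at h1
      have h2 : stdNormalCDF (x + s) ≤ stdNormalCDF (x + z w) :=
        my_cdf_mono (by linarith)
      have he : s * gaussianPDFReal 0 1 (|x| + 1)
          = gaussianPDFReal 0 1 (|x| + 1) * s := mul_comm _ _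
      rw [he]
      linarith
    -- final
    have hd1 : 1 - stdNormalCDF x ≤ 1 := by
      have : (0:ℝ) ≤ stdNormalCDF x := ENNReal.toReal_nonneg
      linarith
    have hd0 : 0 < 1 - stdNormalCDF x := by linarith [my_cdf_lt_one x]
    have hnum : c * w⁻¹ ≤ stdNormalCDF (x + z w) - stdNormalCDF x := by
      have he : c * w⁻¹ = s * gaussianPDFReal 0 1 (|x| + 1) := by
        rw [hcdef, hsdef]; ring
      rw [he]; exact hE
    have hfin : c * w⁻¹
        ≤ (stdNormalCDF (x + z w) - stdNormalCDF x) / (1 - stdNormalCDF x) := by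
      rw [le_div_iff₀ hd0]
      have h1 : c * w⁻¹ * (1 - stdNormalCDF x) ≤ c * w⁻¹ * 1 :=
        mul_le_mul_of_nonneg_left hd1 (by positivity)
      rw [mul_one] at h1
      exact h1.trans hnum
    exact ENNReal.ofReal_le_ofReal hfin
  have hmono : ∫⁻ θ₀ in Set.Iio θ, ENNReal.ofReal (c * (x - θ₀)⁻¹)
      ≤ ∫⁻ θ₀ in Set.Iio θ,
        ENNReal.ofReal
          ((stdNormalCDF (x + z (x - θ₀)) - stdNormalCDF x) / (1 - stdNormalCDF x)) :=
    lintegral_mono_ae ((ae_restrict_iff' measurableSet_Iio).2 (ae_of_all _ key))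
  have htop := lint_Iio_top (θ := θ) (x := x) hc (by linarith)
  exact top_unique (htop ▸ hmono)
end
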